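/- arXiv:2202.00708 — 3 statements merged into one kernel-verified Lean document; each statement's English description precedes it below -/
import Mathlib

section
/- Let α be a composition of n that is not of the form (1^{ℓ−1}, n−ℓ+1), and let P ∈ SIT*(α) with P ≠ S^0_α. Then there exist indices i_1,…,i_r such that successively applying π_{i_1}^{RS*},…,π_{i_r}^{RS*} to S^0_α yields 0, while successively applying the same operators in the same order to P yields a tableau Q ∈ SIT(α) with inv(σ(Q)) = inv(σ(P)) + r. -/
open Classical

namespace ImmHecke

/-- A filling assigns a natural-number entry to each cell `(row, column)` (0-indexed);
row `0` is the bottom row.  Cells outside the diagram carry the junk value `0`. -/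
abbrev Filling : Type := ℕ × ℕ → ℕ

/-- `c` is a cell of the diagram of the composition `α` (0-indexed rows and columns;
row `i` has `α_i` cells). -/
def IsCell (α : List ℕ) (c : ℕ × ℕ) : Prop :=
  c.1 < α.length ∧ c.2 < α.getD c.1 0

/-- `α` is a composition of `n`: a list of positive integers summing to `n`. -/
def IsComposition (α : List ℕ) (n : ℕ) : Prop :=
  (∀ a ∈ α, 0 < a) ∧ α.sum = n

/-- `T` is a bijective filling of the diagram of `α` with the entries `1, …, n`
(where `n = α.sum`), and with value `0` off the diagram. -/
def IsStdFilling (α : List ℕ) (T : Filling) : Prop :=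
  (∀ c, ¬ IsCell α c → T c = 0) ∧
  (∀ c, IsCell α c → 1 ≤ T c ∧ T c ≤ α.sum) ∧
  (∀ c c', IsCell α c → IsCell α c' → T c = T c' → c = c') ∧
  (∀ m, 1 ≤ m → m ≤ α.sum → ∃ c, IsCell α c ∧ T c = m)

/-- A standard immaculate tableau of shape `α`: a bijective standard filling whose
first-column entries strictly increase bottom to top and whose rows strictly
increase left to right. -/
def IsSIT (α : List ℕ) (T : Filling) : Prop :=
  IsStdFilling α T ∧
  (∀ i i' : ℕ, IsCell α (i, 0) → IsCell α (i', 0) → i < i' → T (i, 0) < T (i', 0)) ∧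
  (∀ i j j' : ℕ, IsCell α (i, j) → IsCell α (i, j') → j < j' → T (i, j) < T (i, j'))

/-- A standard extended tableau of shape `α`: a bijective standard filling whose rows
strictly increase left to right and all of whose columns strictly increase
bottom to top.  Note `SET(α) ⊆ SIT(α)`. -/
def IsSET (α : List ℕ) (T : Filling) : Prop :=
  IsStdFilling α T ∧
  (∀ i j j' : ℕ, IsCell α (i, j) → IsCell α (i, j') → j < j' → T (i, j) < T (i, j')) ∧
  (∀ i i' j : ℕ, IsCell α (i, j) → IsCell α (i', j) → i < i' → T (i, j) < T (i', j))

/-- `SIT*(α)`: standard immaculate tableaux whose first column contains exactly the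
entries `1, 2, …, ℓ(α)`. -/
def IsSITstar (α : List ℕ) (T : Filling) : Prop :=
  IsSIT α T ∧
  (∀ i, IsCell α (i, 0) → 1 ≤ T (i, 0) ∧ T (i, 0) ≤ α.length) ∧
  (∀ m, 1 ≤ m → m ≤ α.length → ∃ i, IsCell α (i, 0) ∧ T (i, 0) = m)

/-- In `T`, the entry `m+1` lies in a row strictly above the row of `m`. -/
def SuccAbove (α : List ℕ) (T : Filling) (m : ℕ) : Prop :=
  ∃ c c', IsCell α c ∧ IsCell α c' ∧ T c = m ∧ T c' = m + 1 ∧ c.1 < c'.1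

/-- In `T`, the entries `m` and `m+1` lie in the same row. -/
def SuccSameRow (α : List ℕ) (T : Filling) (m : ℕ) : Prop :=
  ∃ c c', IsCell α c ∧ IsCell α c' ∧ T c = m ∧ T c' = m + 1 ∧ c.1 = c'.1

/-- In `T`, the entry `m+1` lies in a row strictly below the row of `m`. -/
def SuccBelow (α : List ℕ) (T : Filling) (m : ℕ) : Prop :=
  ∃ c c', IsCell α c ∧ IsCell α c' ∧ T c = m ∧ T c' = m + 1 ∧ c'.1 < c.1

/-- In `T`, the entries `m` and `m+1` are both in the first column. -/
def BothFirstColumn (α : List ℕ) (T : Filling) (m : ℕ) : Prop :=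
  ∃ c c', IsCell α c ∧ IsCell α c' ∧ T c = m ∧ T c' = m + 1 ∧ c.2 = 0 ∧ c'.2 = 0

/-- `s_i(T)`: exchange the entries `i` and `i+1` of `T`. -/
def swapEntries (i : ℕ) (T : Filling) : Filling :=
  fun c => if T c = i then i + 1 else if T c = i + 1 then i else T c

/-- The row-strict dual immaculate 0-Hecke operator `π_i^{RS*}` on `SIT(α) ∪ {0}`
(`0` is encoded as `none`): `π_i(T) = T` if `i+1` is strictly above `i`;
`π_i(T) = 0` if `i` and `i+1` are in the same row; `π_i(T) = s_i(T)` if `i+1` is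
strictly below `i`. -/
noncomputable def piRS (α : List ℕ) (i : ℕ) : Option Filling → Option Filling
  | none => none
  | some T =>
    if SuccAbove α T i then some T
    else if SuccSameRow α T i then none
    else some (swapEntries i T)

/-- The dual immaculate 0-Hecke operator `π_i^{S*}` on `SIT(α) ∪ {0}`:
`π_i(T) = T` if `i+1` is in a row weakly below `i`; `π_i(T) = 0` if `i` and `i+1`
are both in the first column; `π_i(T) = s_i(T)` if `i+1` is strictly above `i`
and `i, i+1` are not both in the first column. -/
noncomputable def piS (α : List ℕ) (i : ℕ) : Option Filling → Option Filling
  | none => none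
  | some T =>
    if SuccSameRow α T i ∨ SuccBelow α T i then some T
    else if BothFirstColumn α T i then none
    else some (swapEntries i T)

/-- The 0-Hecke operator `π_i^{A*}` on `SIT(α)`: `π_i(T) = T` if `i+1` is strictly
above `i` or in the same row as `i`; `π_i(T) = s_i(T)` if `i+1` is strictly below `i`. -/
noncomputable def piA (α : List ℕ) (i : ℕ) (T : Filling) : Filling :=
  if SuccBelow α T i then swapEntries i T else T

/-- The 0-Hecke operator `π_i^{Ā*}` on `SIT(α) ∪ {0}`: `π_i(T) = T` if `i+1` is
strictly below `i`; `π_i(T) = 0` if `i` and `i+1` are in the same row or both in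
the first column; `π_i(T) = s_i(T)` if `i+1` is strictly above `i` and `i, i+1`
are not both in the first column. -/
noncomputable def piAbar (α : List ℕ) (i : ℕ) : Option Filling → Option Filling
  | none => none
  | some T =>
    if SuccBelow α T i then some T
    else if SuccSameRow α T i ∨ BothFirstColumn α T i then none
    else some (swapEntries i T)

/-- `x` belongs to `SIT(α) ∪ {0}` (with `0 = none`). -/
def InSITZ (α : List ℕ) (x : Option Filling) : Prop :=
  ∀ T, x = some T → IsSIT α T

/-- Successively apply the operators `π_{i_1}^{RS*}, …, π_{i_r}^{RS*}` (the list `l = [i_1, …, i_r]`). -/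
noncomputable def applySeqRS (α : List ℕ) (l : List ℕ) (x : Option Filling) : Option Filling :=
  l.foldl (fun y i => piRS α i y) x

/-- Successively apply the operators `π_{i_1}^{S*}, …, π_{i_r}^{S*}`. -/
noncomputable def applySeqS (α : List ℕ) (l : List ℕ) (x : Option Filling) : Option Filling :=
  l.foldl (fun y i => piS α i y) x

/-- The relation `T₁ ≼ T₂` on `SIT(α)`: some sequence of operators `π_i^{RS*}`
(indices in `{1, …, n-1}`, possibly empty) sends `T₁` to `T₂`. -/
def preRS (α : List ℕ) (T₁ T₂ : Filling) : Prop :=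
  ∃ l : List ℕ, (∀ i ∈ l, 1 ≤ i ∧ i ≤ α.sum - 1) ∧ applySeqRS α l (some T₁) = some T₂

/-- The one-line notation of `σ(T)`: read the entries of `T` from right to left in
each row, rows from top to bottom. -/
def readingWord (α : List ℕ) (T : Filling) : List ℕ :=
  ((List.range α.length).reverse).flatMap
    (fun i => ((List.range (α.getD i 0)).map fun j => T (i, j)).reverse)

/-- The number of inversions of a word `w`: pairs of positions `p < q` with `w p > w q`. -/
def inversions (w : List ℕ) : ℕ :=
  ((Finset.range w.length ×ˢ Finset.range w.length).filter
    (fun pq : ℕ × ℕ => pq.1 < pq.2 ∧ w.getD pq.2 0 < w.getD pq.1 0)).card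

/-- `S⁰_α`: first column contains `1, …, ℓ` bottom to top; the remaining cells are
filled with `ℓ+1, …, n` consecutively, reading rows from top to bottom and left to
right within each row. -/
noncomputable def S0 (α : List ℕ) : Filling := fun c =>
  if IsCell α c then
    if c.2 = 0 then c.1 + 1
    else
      α.length + (((List.range α.length).filter fun r => c.1 < r).map fun r => α.getD r 0 - 1).sum + c.2
  else 0

/-- `S^{row}_α`: the row superstandard tableau, entries `1, …, n` placed consecutively
reading rows bottom to top, left to right within each row. -/
noncomputable def Srow (α : List ℕ) : Filling := fun c =>
  if IsCell α c then (α.take c.1).sum + c.2 + 1 else 0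

/-- `S^{row*}_α`: first column contains `1, …, ℓ` bottom to top; the remaining cells
are filled with `ℓ+1, …, n` consecutively, reading rows bottom to top, left to right
within each row. -/
noncomputable def SrowStar (α : List ℕ) : Filling := fun c =>
  if IsCell α c then
    if c.2 = 0 then c.1 + 1
    else α.length + ((List.range c.1).map fun r => α.getD r 0 - 1).sum + c.2
  else 0

/-- `S^{col}_α`: the column superstandard tableau, entries `1, …, n` placed
consecutively reading columns bottom to top, columns left to right. -/
noncomputable def Scol (α : List ℕ) : Filling := fun c =>
  if IsCell α c then
    ((List.range c.2).map fun j' =>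
        ((List.range α.length).filter fun r => j' < α.getD r 0).length).sum
      + ((List.range c.1).filter fun r => c.2 < α.getD r 0).length + 1
  else 0

/-- The image of a basis element of `V_α` under the linearly extended operator
`π_i^{RS*}` (the value `0` of the operator is interpreted as the zero vector). -/
noncomputable def piTargetRS (α : List ℕ) (i : ℕ) (T : {T : Filling // IsSIT α T}) :
    ({T : Filling // IsSIT α T} →₀ ℚ) :=
  match piRS α i (some T.val) with
  | none => 0
  | some T' => if h : IsSIT α T' then Finsupp.single ⟨T', h⟩ 1 else 0

/-- The operator `π_i^{RS*}` extended to a `ℚ`-linear endomorphism of the free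
`ℚ`-vector space `V_α` with basis `SIT(α)`. -/
noncomputable def piRSLin (α : List ℕ) (i : ℕ) :
    ({T : Filling // IsSIT α T} →₀ ℚ) →ₗ[ℚ] ({T : Filling // IsSIT α T} →₀ ℚ) :=
  Finsupp.lsum ℚ fun T => LinearMap.toSpanSingleton ℚ _ (piTargetRS α i T)

/-- The image of a basis element of `Z_α` under the linearly extended operator
`π_i^{RS*}`. -/
noncomputable def piTargetSET (α : List ℕ) (i : ℕ) (T : {T : Filling // IsSET α T}) :
    ({T : Filling // IsSET α T} →₀ ℚ) :=
  match piRS α i (some T.val) with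
  | none => 0
  | some T' => if h : IsSET α T' then Finsupp.single ⟨T', h⟩ 1 else 0

/-- The operator `π_i^{RS*}` extended to a `ℚ`-linear endomorphism of the free
`ℚ`-vector space `Z_α` with basis `SET(α)`. -/
noncomputable def piRSLinSET (α : List ℕ) (i : ℕ) :
    ({T : Filling // IsSET α T} →₀ ℚ) →ₗ[ℚ] ({T : Filling // IsSET α T} →₀ ℚ) :=
  Finsupp.lsum ℚ fun T => LinearMap.toSpanSingleton ℚ _ (piTargetSET α i T)

/-!
Let `m` be the smallest entry whose cell in `P` differs from its cell in `S⁰_α`. Both tableaux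
carry `1, …, ℓ` up the first column, so `m` lies outside it, in row `r` of `P` and in cell
`(r₀, j₀)` of `S⁰_α`; since `S⁰_α` fills its rows from the top down, `r < r₀`. Put
`a = S⁰_α(r₀, j₀ - 1)`. The entries `a, …, m - 1` occupy the same cells in both tableaux, all in
rows `≥ r₀`, and only `a` lies in row `r₀`. Hence `π_{m-1}, π_{m-2}, …, π_a` each swap the moving
entry `k + 1` with `k` sitting above it in `P`, adding one inversion at a time, whereas in `S⁰_α`
the last operator `π_a` finds `a` and `a + 1` in the same row and returns `0`.
-/

section SingleStep

variable {α : List ℕ} {T : Filling} {i : ℕ} {c c' : ℕ × ℕ}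

theorem IsStdFilling.injOn (hT : IsStdFilling α T) : Set.InjOn T {c | IsCell α c} :=
  fun c hc c' hc' h => hT.2.2.1 c c' hc hc' h

theorem swapEntries_eq_comp (i : ℕ) (T : Filling) :
    swapEntries i T = Equiv.swap i (i + 1) ∘ T := by
  funext c
  simp only [swapEntries, Function.comp_apply, Equiv.swap_apply_def]

theorem swap_succ_lt_swap_succ_iff {i x y : ℕ} (h : ¬ (x = i ∧ y = i + 1))
    (h' : ¬ (x = i + 1 ∧ y = i)) :
    Equiv.swap i (i + 1) x < Equiv.swap i (i + 1) y ↔ x < y := by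
  simp only [Equiv.swap_apply_def]
  split_ifs <;> omega

theorem piRS_some_of_cells (hT : Set.InjOn T {c | IsCell α c}) (hc : IsCell α c)
    (hc' : IsCell α c') (hTc : T c = i) (hTc' : T c' = i + 1) :
    piRS α i (some T) =
      if c.1 < c'.1 then some T else if c.1 = c'.1 then none else some (swapEntries i T) := by
  have hcells : ∀ d d', IsCell α d → IsCell α d' → T d = i → T d' = i + 1 → d = c ∧ d' = c' :=
    fun d d' hd hd' h h' => ⟨hT hd hc (h.trans hTc.symm), hT hd' hc' (h'.trans hTc'.symm)⟩
  have habove : SuccAbove α T i ↔ c.1 < c'.1 := by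
    refine ⟨fun ⟨d, d', hd, hd', h, h', hlt⟩ => ?_, fun h => ⟨c, c', hc, hc', hTc, hTc', h⟩⟩
    obtain ⟨rfl, rfl⟩ := hcells d d' hd hd' h h'
    exact hlt
  have hsame : SuccSameRow α T i ↔ c.1 = c'.1 := by
    refine ⟨fun ⟨d, d', hd, hd', h, h', heq⟩ => ?_, fun h => ⟨c, c', hc, hc', hTc, hTc', h⟩⟩
    obtain ⟨rfl, rfl⟩ := hcells d d' hd hd' h h'
    exact heq
  simp only [piRS, habove, hsame]

theorem IsSIT.swapEntries (hT : IsSIT α T) (hc : IsCell α c) (hc' : IsCell α c')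
    (hTc : T c = i) (hTc' : T c' = i + 1) (hrow : c'.1 < c.1) :
    IsSIT α (swapEntries i T) := by
  obtain ⟨⟨hoff, hbd, hinj, hsurj⟩, hcol, hrows⟩ := hT
  have hi : 1 ≤ i := by have := (hbd c hc).1; omega
  have hin : i + 1 ≤ α.sum := by have := (hbd c' hc').2; omega
  have hpair : ∀ d d', IsCell α d → IsCell α d' → d.1 ≤ d'.1 → T d < T d' →
      ¬ (T d = i ∧ T d' = i + 1) ∧ ¬ (T d = i + 1 ∧ T d' = i) := by
    refine fun d d' hd hd' hle hlt => ⟨fun ⟨h, h'⟩ => ?_, fun ⟨h, h'⟩ => by omega⟩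
    cases hinj d c hd hc (h.trans hTc.symm)
    cases hinj d' c' hd' hc' (h'.trans hTc'.symm)
    omega
  rw [swapEntries_eq_comp]
  refine ⟨⟨fun d hd => ?_, fun d hd => ?_, fun d d' hd hd' h => ?_, fun v h1 h2 => ?_⟩, ?_, ?_⟩
  · rw [Function.comp_apply, hoff d hd]
    exact Equiv.swap_apply_of_ne_of_ne (by omega) (by omega)
  · have := hbd d hd
    simp only [Function.comp_apply, Equiv.swap_apply_def]
    split_ifs <;> omega
  · exact hinj d d' hd hd' ((Equiv.swap i (i + 1)).injective h)
  · obtain ⟨d, hd, hTd⟩ := hsurj (Equiv.swap i (i + 1) v)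
      (by simp only [Equiv.swap_apply_def]; split_ifs <;> omega)
      (by simp only [Equiv.swap_apply_def]; split_ifs <;> omega)
    exact ⟨d, hd, by simp [hTd]⟩
  · intro x x' hx hx' hlt
    have hTlt := hcol x x' hx hx' hlt
    obtain ⟨h, h'⟩ := hpair _ _ hx hx' hlt.le hTlt
    exact (swap_succ_lt_swap_succ_iff h h').mpr hTlt
  · intro x y y' hy hy' hlt
    have hTlt := hrows x y y' hy hy' hlt
    obtain ⟨h, h'⟩ := hpair _ _ hy hy' le_rfl hTlt
    exact (swap_succ_lt_swap_succ_iff h h').mpr hTlt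

end SingleStep

section Inversions

theorem inversions_map_swap {w : List ℕ} (hw : w.Nodup) {i p q : ℕ} (hpq : p < q)
    (hq : q < w.length) (hwp : w[p] = i) (hwq : w[q] = i + 1) :
    inversions (w.map (Equiv.swap i (i + 1))) = inversions w + 1 := by
  have hget : ∀ k (hk : k < w.length),
      (w.map (Equiv.swap i (i + 1))).getD k 0 = Equiv.swap i (i + 1) w[k] := fun k hk => by
    rw [List.getD_eq_getElem _ _ (by simpa using hk), List.getElem_map]
  have hidx : ∀ k (hk : k < w.length) l (hl : l < w.length), w[k] = w[l] → k = l :=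
    fun k hk l hl h => (hw.getElem_inj_iff).mp h
  have hsame : ∀ x y (hx : x < w.length) (hy : y < w.length), x < y → ¬ (x = p ∧ y = q) →
      ((w.map (Equiv.swap i (i + 1))).getD y 0 < (w.map (Equiv.swap i (i + 1))).getD x 0 ↔
        w.getD y 0 < w.getD x 0) := by
    intro x y hx hy hxy hne
    rw [hget x hx, hget y hy, List.getD_eq_getElem _ _ hx, List.getD_eq_getElem _ _ hy]
    refine swap_succ_lt_swap_succ_iff (fun ⟨h, h'⟩ => ?_) (fun ⟨h, h'⟩ => ?_)
    · cases hidx y hy p (by omega) (h.trans hwp.symm)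
      cases hidx x hx q hq (h'.trans hwq.symm)
      omega
    · exact hne ⟨hidx x hx p (by omega) (h'.trans hwp.symm), hidx y hy q hq (h.trans hwq.symm)⟩
  -- swapping two adjacent values flips their own comparison and no other
  unfold inversions
  rw [List.length_map, ← Finset.card_insert_of_notMem (a := (p, q))]
  · congr 1
    ext ⟨x, y⟩
    simp only [Finset.mem_filter, Finset.mem_insert, Finset.mem_product, Finset.mem_range,
      Prod.mk.injEq]
    by_cases hxy : x = p ∧ y = q
    · obtain ⟨rfl, rfl⟩ := hxy
      rw [hget x (by omega), hget y hq, hwp, hwq, Equiv.swap_apply_left, Equiv.swap_apply_right]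
      exact iff_of_true ⟨⟨by omega, hq⟩, hpq, by omega⟩ (Or.inl (by simp))
    · simp only [hxy, false_or]
      exact and_congr_right fun ⟨hx, hy⟩ => and_congr_right fun hlt => hsame x y hx hy hlt hxy
  · simp only [Finset.mem_filter, not_and, not_lt]
    intro _ _
    rw [List.getD_eq_getElem _ _ (by omega), List.getD_eq_getElem _ _ hq, hwp, hwq]
    omega

end Inversions

section ReadingWord

variable {α : List ℕ} {T : Filling} {i : ℕ} {c c' : ℕ × ℕ}

def readingCells (α : List ℕ) : List (ℕ × ℕ) :=
  (List.range α.length).reverse.flatMap fun i =>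
    ((List.range (α.getD i 0)).map fun j => (i, j)).reverse

theorem readingWord_eq_map (α : List ℕ) (T : Filling) :
    readingWord α T = (readingCells α).map T := by
  simp only [readingWord, readingCells, List.map_flatMap, List.map_reverse, List.map_map]
  rfl

theorem mem_readingCells : c ∈ readingCells α ↔ IsCell α c := by
  simp only [readingCells, List.mem_flatMap, List.mem_reverse, List.mem_range, List.mem_map]
  exact ⟨fun ⟨i, hi, j, hj, hc⟩ => hc ▸ ⟨hi, hj⟩, fun h => ⟨c.1, h.1, c.2, h.2, rfl⟩⟩

theorem pairwise_readingCells (α : List ℕ) :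
    (readingCells α).Pairwise fun c c' => c'.1 ≤ c.1 ∧ c ≠ c' := by
  rw [readingCells, List.flatMap_def, List.pairwise_flatten, List.pairwise_map,
    List.pairwise_reverse]
  refine ⟨?_, List.pairwise_lt_range.imp fun {i i'} hlt => ?_⟩
  · simp only [List.mem_map, List.mem_reverse, List.mem_range, forall_exists_index, and_imp]
    rintro _ i - rfl
    rw [List.pairwise_reverse, List.pairwise_map]
    exact List.pairwise_lt_range.imp fun hlt => ⟨le_rfl, by simp [hlt.ne']⟩
  · simp only [List.mem_reverse, List.mem_map, List.mem_range]
    rintro _ ⟨j, -, rfl⟩ _ ⟨j', -, rfl⟩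
    exact ⟨hlt.le, by simp [hlt.ne']⟩

theorem inversions_readingWord_swapEntries (hT : Set.InjOn T {c | IsCell α c})
    (hc : IsCell α c) (hc' : IsCell α c') (hTc : T c = i) (hTc' : T c' = i + 1)
    (hrow : c'.1 < c.1) :
    inversions (readingWord α (swapEntries i T)) = inversions (readingWord α T) + 1 := by
  have hpair := List.pairwise_iff_getElem.mp (pairwise_readingCells α)
  have hnodup : (readingCells α).Nodup :=
    List.nodup_iff_pairwise_ne.mpr ((pairwise_readingCells α).imp And.right)
  obtain ⟨p, hp, rfl⟩ := List.getElem_of_mem (mem_readingCells.mpr hc)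
  obtain ⟨q, hq, rfl⟩ := List.getElem_of_mem (mem_readingCells.mpr hc')
  have hpq : p < q := by
    rcases lt_trichotomy p q with h | rfl | h
    · exact h
    · omega
    · exact absurd (hpair q p hq hp h).1 (by omega)
  rw [readingWord_eq_map, readingWord_eq_map, swapEntries_eq_comp, ← List.map_map]
  refine inversions_map_swap
    (hnodup.map_on fun d hd d' hd' h => hT (mem_readingCells.mp hd) (mem_readingCells.mp hd') h)
    hpq (by simpa using hq) (by simpa using hTc) (by simpa using hTc')

end ReadingWord

section Descent

variable {α : List ℕ} {T : Filling}

theorem applySeqRS_append (α l₁ l₂ : List ℕ) (x : Option Filling) :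
    applySeqRS α (l₁ ++ l₂) x = applySeqRS α l₂ (applySeqRS α l₁ x) :=
  List.foldl_append

def rotateEntries (a m : ℕ) (T : Filling) : Filling := fun c =>
  if T c = m then a else if a ≤ T c ∧ T c < m then T c + 1 else T c

theorem rotateEntries_self (a : ℕ) (T : Filling) : rotateEntries a a T = T := by
  funext c
  simp only [rotateEntries]
  split_ifs <;> omega

theorem swapEntries_rotateEntries {a m : ℕ} (T : Filling) (h : a < m) :
    swapEntries a (rotateEntries (a + 1) m T) = rotateEntries a m T := by
  funext c
  simp only [swapEntries, rotateEntries]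
  split_ifs <;> omega

/-- Each `π_k`, `k = a + d - 1, …, a`, finds `k + 1` (the entry that started as `a + d` in
`cs`) strictly below `k`, so it swaps them. -/
theorem applySeqRS_range'_reverse (hT : IsSIT α T) {cs : ℕ × ℕ} (hcs : IsCell α cs) {a d : ℕ}
    (ha : 1 ≤ a) (hTcs : T cs = a + d)
    (hrows : ∀ c, IsCell α c → a ≤ T c → T c < a + d → cs.1 < c.1) :
    applySeqRS α (List.range' a d).reverse (some T) = some (rotateEntries a (a + d) T) ∧
      IsSIT α (rotateEntries a (a + d) T) ∧
      inversions (readingWord α (rotateEntries a (a + d) T)) =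
        inversions (readingWord α T) + d := by
  induction d generalizing a with
  | zero =>
    rw [Nat.add_zero, rotateEntries_self, Nat.add_zero]
    exact ⟨rfl, hT, rfl⟩
  | succ d ih =>
    obtain ⟨hseq, hsit, hinv⟩ := ih (a := a + 1) (by omega) (by omega)
      fun c hc h1 h2 => hrows c hc (by omega) (by omega)
    rw [show a + 1 + d = a + (d + 1) by omega] at hseq hsit hinv
    set S := rotateEntries (a + 1) (a + (d + 1)) T
    obtain ⟨ca, hca, hTca⟩ := hT.1.2.2.2 a ha (by have := (hT.1.2.1 cs hcs).2; omega)
    have hSca : S ca = a := by simp only [S, rotateEntries, hTca]; split_ifs <;> omega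
    have hScs : S cs = a + 1 := by simp only [S, rotateEntries, hTcs]; split_ifs <;> omega
    have hrow : cs.1 < ca.1 := hrows ca hca (by omega) (by omega)
    have hswap : swapEntries a S = rotateEntries a (a + (d + 1)) T :=
      swapEntries_rotateEntries T (by omega)
    refine ⟨?_, hswap ▸ hsit.swapEntries hca hcs hSca hScs hrow, ?_⟩
    · rw [List.range'_succ, List.reverse_cons, applySeqRS_append, hseq]
      change piRS α a (some S) = _
      rw [piRS_some_of_cells hsit.1.injOn hca hcs hSca hScs, if_neg (by omega),
        if_neg (by omega), hswap]
    · rw [← hswap, inversions_readingWord_swapEntries hsit.1.injOn hca hcs hSca hScs hrow, hinv]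
      omega

theorem applySeqRS_range'_reverse_eq_none (hT : IsSIT α T) {ca cs : ℕ × ℕ} (hca : IsCell α ca)
    (hcs : IsCell α cs) {a d : ℕ} (hTca : T ca = a) (hTcs : T cs = a + 1 + d)
    (hrow : ca.1 = cs.1) (hrows : ∀ c, IsCell α c → a < T c → T c < a + 1 + d → cs.1 < c.1) :
    applySeqRS α (List.range' a (d + 1)).reverse (some T) = none := by
  have ha : 1 ≤ a + 1 := by omega
  obtain ⟨hseq, hsit, -⟩ := applySeqRS_range'_reverse hT hcs ha hTcs
    fun c hc h1 h2 => hrows c hc (by omega) h2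
  set S := rotateEntries (a + 1) (a + 1 + d) T
  have hSca : S ca = a := by simp only [S, rotateEntries, hTca]; split_ifs <;> omega
  have hScs : S cs = a + 1 := by simp only [S, rotateEntries, hTcs]; split_ifs <;> omega
  rw [List.range'_succ, List.reverse_cons, applySeqRS_append, hseq]
  change piRS α a (some S) = _
  rw [piRS_some_of_cells hsit.1.injOn hca hcs hSca hScs, if_neg (by omega), if_pos hrow]

end Descent

section Superstandard

variable {α : List ℕ}

theorem sum_range_getD (α : List ℕ) : ∑ r ∈ Finset.range α.length, α.getD r 0 = α.sum := by
  induction α with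
  | nil => rfl
  | cons x t ih =>
    rw [List.length_cons, Finset.sum_range_succ']
    simp only [List.getD_cons_succ, List.getD_cons_zero, List.sum_cons, ih, add_comm]

/-- The number of cells outside the first column in the rows above row `i`. -/
def armsAbove (α : List ℕ) (i : ℕ) : ℕ :=
  ∑ r ∈ Finset.Ico (i + 1) α.length, (α.getD r 0 - 1)

theorem armsAbove_of_le {i : ℕ} (h : α.length ≤ i + 1) : armsAbove α i = 0 := by
  rw [armsAbove, Finset.Ico_eq_empty_of_le h, Finset.sum_empty]

theorem armsAbove_eq {i : ℕ} (h : i + 1 < α.length) :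
    armsAbove α i = (α.getD (i + 1) 0 - 1) + armsAbove α (i + 1) :=
  Finset.sum_eq_sum_Ico_succ_bot h _

theorem armsAbove_add_le {i j : ℕ} (h : i < j) (hj : j < α.length) :
    armsAbove α j + (α.getD j 0 - 1) ≤ armsAbove α i := by
  rw [armsAbove, add_comm, ← Finset.sum_eq_sum_Ico_succ_bot hj (fun r => α.getD r 0 - 1)]
  exact Finset.sum_le_sum_of_subset (Finset.Ico_subset_Ico_left h)

theorem getD_pos (hpos : ∀ a ∈ α, 0 < a) {i : ℕ} (h : i < α.length) : 0 < α.getD i 0 := by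
  rw [List.getD_eq_getElem _ _ h]
  exact hpos _ (List.getElem_mem h)

theorem length_add_armsAbove_zero (hpos : ∀ a ∈ α, 0 < a) (h : 0 < α.length) :
    α.length + armsAbove α 0 + (α.getD 0 0 - 1) = α.sum := by
  have hsum : armsAbove α 0 + (α.getD 0 0 - 1) = α.sum - α.length := by
    rw [add_comm, armsAbove, ← Finset.sum_eq_sum_Ico_succ_bot h (fun r => α.getD r 0 - 1),
      ← Finset.range_eq_Ico,
      Finset.sum_tsub_distrib _ fun r hr => getD_pos hpos (Finset.mem_range.mp hr),
      sum_range_getD, Finset.sum_const, Finset.card_range, smul_eq_mul, mul_one]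
  have hle : α.length ≤ α.sum := by
    have := Finset.card_nsmul_le_sum (Finset.range α.length) (fun r => α.getD r 0) 1
      fun r hr => getD_pos hpos (Finset.mem_range.mp hr)
    rwa [sum_range_getD, Finset.card_range, smul_eq_mul, mul_one] at this
  omega

theorem S0_zero (hpos : ∀ a ∈ α, 0 < a) {i : ℕ} (h : i < α.length) : S0 α (i, 0) = i + 1 := by
  simp only [S0, if_pos (show IsCell α (i, 0) from ⟨h, getD_pos hpos h⟩), if_true]

theorem S0_of_ne_zero {i j : ℕ} (hc : IsCell α (i, j)) (hj : j ≠ 0) :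
    S0 α (i, j) = α.length + armsAbove α i + j := by
  have hfilter : (Finset.range α.length).filter (fun r => i < r) = Finset.Ico (i + 1) α.length := by
    ext r
    simp only [Finset.mem_filter, Finset.mem_range, Finset.mem_Ico]
    omega
  simp only [S0, if_pos hc, if_neg hj, armsAbove, ← hfilter]
  rfl

theorem S0_lt_S0_iff {i j i' j' : ℕ} (hc : IsCell α (i, j)) (hc' : IsCell α (i', j'))
    (hj : j ≠ 0) (hj' : j' ≠ 0) :
    S0 α (i, j) < S0 α (i', j') ↔ i' < i ∨ i = i' ∧ j < j' := by
  rw [S0_of_ne_zero hc hj, S0_of_ne_zero hc' hj']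
  have : j < α.getD i 0 := hc.2
  have : j' < α.getD i' 0 := hc'.2
  rcases lt_trichotomy i i' with h | rfl | h
  · have := armsAbove_add_le h hc'.1
    omega
  · omega
  · have := armsAbove_add_le h hc.1
    omega

theorem S0_le_sum (hpos : ∀ a ∈ α, 0 < a) {c : ℕ × ℕ} (hc : IsCell α c) : S0 α c ≤ α.sum := by
  obtain ⟨i, j⟩ := c
  have hl : 0 < α.length := by have := hc.1; omega
  have htotal := length_add_armsAbove_zero hpos hl
  rcases Nat.eq_zero_or_pos j with rfl | hj
  · rw [S0_zero hpos hc.1]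
    have := hc.1
    omega
  rw [S0_of_ne_zero hc hj.ne']
  have : j < α.getD i 0 := hc.2
  rcases Nat.eq_zero_or_pos i with rfl | hi
  · omega
  · have := armsAbove_add_le hi hc.1
    omega

theorem exists_S0_eq (hpos : ∀ a ∈ α, 0 < a) {v : ℕ} (h1 : 1 ≤ v) (hv : v ≤ α.sum) :
    ∃ c, IsCell α c ∧ S0 α c = v := by
  have hl : 0 < α.length := List.length_pos_iff.mpr (by rintro rfl; simp at hv; omega)
  by_cases hvl : v ≤ α.length
  · exact ⟨(v - 1, 0), ⟨by omega, getD_pos hpos (by omega)⟩, by rw [S0_zero hpos (by omega)]; omega⟩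
  have hex : ∃ i, armsAbove α i < v - α.length :=
    ⟨α.length, by rw [armsAbove_of_le (by omega)]; omega⟩
  obtain ⟨i, hi, hmin⟩ : ∃ i, armsAbove α i < v - α.length ∧
      ∀ k < i, ¬ armsAbove α k < v - α.length :=
    ⟨Nat.find hex, Nat.find_spec hex, fun k hk => Nat.find_min hex hk⟩
  -- the row of `v` is the lowest row `i` with fewer than `v - ℓ` arm cells above it
  have hrow : i < α.length ∧ v - α.length - armsAbove α i < α.getD i 0 := by
    rcases Nat.eq_zero_or_pos i with h0 | h0
    · have := length_add_armsAbove_zero hpos hl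
      have := getD_pos hpos hl
      rw [h0] at hi ⊢
      omega
    · have hmin := hmin (i - 1) (by omega)
      have hil : i < α.length := by
        by_contra hge
        rw [armsAbove_of_le (by omega)] at hmin
        omega
      have := armsAbove_eq (α := α) (i := i - 1) (by omega)
      rw [Nat.sub_add_cancel h0] at this
      have := getD_pos hpos hil
      omega
  refine ⟨(i, v - α.length - armsAbove α i), hrow, ?_⟩
  rw [S0_of_ne_zero hrow (by omega)]
  omega

theorem isSIT_S0 (hpos : ∀ a ∈ α, 0 < a) : IsSIT α (S0 α) := by
  refine ⟨⟨fun c hc => if_neg hc, fun c hc => ⟨?_, S0_le_sum hpos hc⟩, ?_,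
    fun v h1 h2 => exists_S0_eq hpos h1 h2⟩, ?_, ?_⟩
  · obtain ⟨i, j⟩ := c
    rcases Nat.eq_zero_or_pos j with rfl | hj
    · rw [S0_zero hpos hc.1]
      omega
    · rw [S0_of_ne_zero hc hj.ne']
      omega
  · rintro ⟨i, j⟩ ⟨i', j'⟩ hc hc' h
    rcases Nat.eq_zero_or_pos j with rfl | hj <;> rcases Nat.eq_zero_or_pos j' with rfl | hj'
    · rw [S0_zero hpos hc.1, S0_zero hpos hc'.1] at h
      rw [show i = i' by omega]
    · rw [S0_zero hpos hc.1, S0_of_ne_zero hc' hj'.ne'] at h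
      have := hc.1
      omega
    · rw [S0_of_ne_zero hc hj.ne', S0_zero hpos hc'.1] at h
      have := hc'.1
      omega
    · have h1 := (S0_lt_S0_iff hc hc' hj.ne' hj'.ne').not.mp h.not_lt
      have h2 := (S0_lt_S0_iff hc' hc hj'.ne' hj.ne').not.mp h.not_gt
      rw [Prod.mk.injEq]
      omega
  · intro i i' hc hc' h
    rw [S0_zero hpos hc.1, S0_zero hpos hc'.1]
    omega
  · intro i j j' hc hc' h
    rcases Nat.eq_zero_or_pos j with rfl | hj
    · rw [S0_zero hpos hc.1, S0_of_ne_zero hc' (by omega)]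
      have := hc.1
      omega
    · exact (S0_lt_S0_iff hc hc' hj.ne' (by omega)).mpr (Or.inr ⟨rfl, h⟩)

end Superstandard

section FirstDisplacement

variable {α : List ℕ}

theorem exists_min_displaced {T T' : Filling} (hT : IsStdFilling α T)
    (hT' : IsStdFilling α T') (hne : T ≠ T') :
    ∃ c c', IsCell α c ∧ IsCell α c' ∧ T c = T' c' ∧ c ≠ c' ∧
      ∀ d, IsCell α d → T d < T c ∨ T' d < T c → T d = T' d := by
  obtain ⟨hoff, hbd, -, hsurj⟩ := hT
  obtain ⟨hoff', hbd', hinj', hsurj'⟩ := hT'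
  have hex : ∃ v, ∃ c, IsCell α c ∧ T c = v ∧ T' c ≠ v := by
    by_contra! h
    exact hne (funext fun c => if hc : IsCell α c then (h _ c hc rfl).symm
      else by rw [hoff c hc, hoff' c hc])
  obtain ⟨c, hc, hTc, hT'c⟩ := Nat.find_spec hex
  have hmin : ∀ e, IsCell α e → T e < T c → T' e = T e := fun e he hlt =>
    by_contra fun h => Nat.find_min hex (hTc ▸ hlt) ⟨e, he, rfl, h⟩
  obtain ⟨c', hc', hT'c'⟩ := hsurj' (T c) (hbd c hc).1 (hbd c hc).2
  refine ⟨c, c', hc, hc', hT'c'.symm, fun h => hT'c (hTc ▸ h ▸ hT'c'), fun d hd hlt => ?_⟩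
  rcases hlt with hlt | hlt
  · exact (hmin d hd hlt).symm
  · obtain ⟨e, he, hTe⟩ := hsurj (T' d) (hbd' d hd).1 (hbd' d hd).2
    cases hinj' e d he hd ((hmin e he (hTe ▸ hlt)).trans hTe)
    exact hTe

theorem eq_succ_of_strictMono_of_le {f : ℕ → ℕ} {ℓ : ℕ}
    (hmono : ∀ i i', i < i' → i' < ℓ → f i < f i') (hbd : ∀ i < ℓ, 1 ≤ f i ∧ f i ≤ ℓ)
    {i : ℕ} (hi : i < ℓ) : f i = i + 1 := by
  have hgrowth : ∀ i k, i + k < ℓ → f i + k ≤ f (i + k) := by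
    intro i k
    induction k with
    | zero => simp
    | succ k ih =>
      intro hk
      have := hmono (i + k) (i + (k + 1)) (by omega) hk
      have := ih (by omega)
      omega
  have hlow := hgrowth 0 i (by omega)
  have hhigh := hgrowth i (ℓ - 1 - i) (by omega)
  rw [Nat.zero_add] at hlow
  rw [show i + (ℓ - 1 - i) = ℓ - 1 by omega] at hhigh
  have := hbd 0 (by omega)
  have := hbd (ℓ - 1) (by omega)
  omega

theorem IsSITstar.apply_zero {P : Filling} (hpos : ∀ a ∈ α, 0 < a) (hP : IsSITstar α P)
    {i : ℕ} (hi : i < α.length) : P (i, 0) = i + 1 :=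
  eq_succ_of_strictMono_of_le (f := fun i => P (i, 0))
    (fun i i' h h' => hP.1.2.1 i i' ⟨by omega, getD_pos hpos (by omega)⟩ ⟨h', getD_pos hpos h'⟩ h)
    (fun i h => hP.2.1 i ⟨h, getD_pos hpos h⟩) hi

end FirstDisplacement

section Geometry

variable {α : List ℕ}

theorem IsCell.of_le {i j k : ℕ} (h : IsCell α (i, j)) (hk : k ≤ j) : IsCell α (i, k) :=
  ⟨h.1, lt_of_le_of_lt hk h.2⟩

theorem row_lt_of_S0_between (hpos : ∀ a ∈ α, 0 < a) {r₀ j₀ : ℕ} (hc₀ : IsCell α (r₀, j₀))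
    (hj₀ : j₀ ≠ 0) {c : ℕ × ℕ} (hc : IsCell α c) (hlow : S0 α (r₀, j₀ - 1) < S0 α c)
    (hhigh : S0 α c < S0 α (r₀, j₀)) : r₀ < c.1 := by
  obtain ⟨x, y⟩ := c
  have hc₀' : IsCell α (r₀, j₀ - 1) := hc₀.of_le (Nat.sub_le j₀ 1)
  rcases Nat.eq_zero_or_pos y with rfl | hy
  · rw [S0_zero hpos hc.1] at hlow
    have := hc.1
    rcases Nat.lt_or_ge j₀ 2 with hj | hj
    · rw [show j₀ - 1 = 0 by omega, S0_zero hpos hc₀.1] at hlow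
      exact Nat.lt_of_succ_lt_succ hlow
    · rw [S0_of_ne_zero hc₀' (by omega)] at hlow
      omega
  rcases (S0_lt_S0_iff hc hc₀ hy.ne' hj₀).mp hhigh with h | ⟨rfl, hlt⟩
  · exact h
  · rcases Nat.lt_or_ge j₀ 2 with hj | hj
    · omega
    · have := (S0_lt_S0_iff hc₀' hc (by omega) hy.ne').mp hlow
      omega

variable {P : Filling} {cP cS : ℕ × ℕ}

theorem col_ne_zero_and_row_lt_of_displaced (hpos : ∀ a ∈ α, 0 < a) (hP : IsSITstar α P) (hcP : IsCell α cP)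
    (hcS : IsCell α cS) (hm : P cP = S0 α cS) (hne : cP ≠ cS)
    (hagree : ∀ d, IsCell α d → P d < P cP ∨ S0 α d < P cP → P d = S0 α d) :
    cS.2 ≠ 0 ∧ cP.1 < cS.1 := by
  obtain ⟨r, j⟩ := cP
  obtain ⟨r₀, j₀⟩ := cS
  have hS := (isSIT_S0 hpos).1.2.2.1
  have hj₀ : j₀ ≠ 0 := by
    rintro rfl
    refine hne (hP.1.1.2.2.1 _ _ hcP hcS ?_)
    rw [hm, hP.apply_zero hpos hcS.1, S0_zero hpos hcS.1]
  have hj : j ≠ 0 := by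
    rintro rfl
    refine hne (hS _ _ hcP hcS ?_)
    rw [← hm, hP.apply_zero hpos hcP.1, S0_zero hpos hcP.1]
  have hlt : S0 α (r₀, j₀) < S0 α (r, j) := by
    rcases lt_trichotomy (S0 α (r, j)) (S0 α (r₀, j₀)) with h | h | h
    · have := hagree _ hcP (Or.inr (hm ▸ h))
      omega
    · exact absurd (hS _ _ hcP hcS h) hne
    · exact h
  refine ⟨hj₀, ?_⟩
  rcases (S0_lt_S0_iff hcS hcP hj₀ hj).mp hlt with h | ⟨rfl, hjj⟩
  · exact h
  · have hrow := hP.1.2.2 r₀ j₀ j hcS hcP hjj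
    have := hagree _ hcS (Or.inl hrow)
    omega

end Geometry

theorem exists_seq_kills_S0_not_P_general (n : ℕ) (α : List ℕ) (hα : IsComposition α n)
    (P : Filling) (hP : IsSITstar α P) (hne : P ≠ S0 α) :
    ∃ l : List ℕ, (∀ i ∈ l, 1 ≤ i ∧ i ≤ n - 1) ∧
      applySeqRS α l (some (S0 α)) = none ∧
      ∃ Q : Filling, IsSIT α Q ∧ applySeqRS α l (some P) = some Q ∧
        inversions (readingWord α Q) = inversions (readingWord α P) + l.length := by
  obtain ⟨hpos, rfl⟩ := hα
  have hS := isSIT_S0 hpos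
  obtain ⟨cP, ⟨r₀, j₀⟩, hcP, hcS, hm, hne', hagree⟩ := exists_min_displaced hP.1.1 hS.1 hne
  obtain ⟨hj₀, hrow⟩ := col_ne_zero_and_row_lt_of_displaced hpos hP hcP hcS hm hne' hagree
  have hca : IsCell α (r₀, j₀ - 1) := hcS.of_le (Nat.sub_le j₀ 1)
  set a := S0 α (r₀, j₀ - 1)
  have ha : 1 ≤ a := (hS.1.2.1 _ hca).1
  have hlt : a < P cP := hm ▸ hS.2.2 r₀ (j₀ - 1) j₀ hca hcS (by omega)
  have hle : P cP ≤ α.sum := (hP.1.1.2.1 _ hcP).2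
  obtain ⟨d, hd⟩ : ∃ d, P cP = a + 1 + d := ⟨P cP - a - 1, by omega⟩
  have hrowsS : ∀ c, IsCell α c → a < S0 α c → S0 α c < P cP → r₀ < c.1 :=
    fun c hc h1 h2 => row_lt_of_S0_between hpos hcS hj₀ hc h1 (hm ▸ h2)
  have hrowsP : ∀ c, IsCell α c → a ≤ P c → P c < a + (d + 1) → cP.1 < c.1 := by
    intro c hc h1 h2
    have hPc := hagree c hc (Or.inl (by omega))
    rcases h1.lt_or_eq with h1 | h1
    · exact hrow.trans (hrowsS c hc (hPc ▸ h1) (by omega))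
    · rw [hS.1.2.2.1 _ _ hc hca (hPc ▸ h1).symm]
      exact hrow
  obtain ⟨hseq, hsit, hinv⟩ := applySeqRS_range'_reverse hP.1 hcP ha (by omega) hrowsP
  refine ⟨(List.range' a (d + 1)).reverse, fun i hi => ?_,
    applySeqRS_range'_reverse_eq_none hS hca hcS rfl (hm ▸ hd) rfl
      fun c hc h1 h2 => hrowsS c hc h1 (by omega), _, hsit, hseq, by simpa using hinv⟩
  simp only [List.mem_reverse, List.mem_range'_1] at hi
  omega

theorem exists_seq_kills_S0_not_P (n : ℕ) (α : List ℕ) (hα : IsComposition α n)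
    (hhook : ¬ (∀ k, k + 1 < α.length → α.getD k 0 = 1))
    (P : Filling) (hP : IsSITstar α P) (hne : P ≠ S0 α) :
    ∃ l : List ℕ, (∀ i ∈ l, 1 ≤ i ∧ i ≤ n - 1) ∧
      applySeqRS α l (some (S0 α)) = none ∧
      ∃ Q : Filling, IsSIT α Q ∧ applySeqRS α l (some P) = some Q ∧
        inversions (readingWord α Q) = inversions (readingWord α P) + l.length :=
  exists_seq_kills_S0_not_P_general n α hα P hP hne

end ImmHecke
end

section
/- Let α be a composition of n and let f : V_α → V_α be a ℚ-linear map with f ∘ f = f and f ∘ π_i^{RS*} = π_i^{RS*} ∘ f for all 1 ≤ i ≤ n−1. Then f = 0 or f is the identity map. (In other words, the 0-Hecke module V_α with the row-strict dual immaculate action is indecomposable.) -/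
open Classical

namespace ImmHecke

/-! ### Auxiliary development -/

section Aux

variable {α : List ℕ}

/-- partial sums of a composition -/
def bsum (α : List ℕ) (i : ℕ) : ℕ := (α.take i).sum

lemma bsum_succ {i : ℕ} (h : i < α.length) :
    bsum α (i + 1) = bsum α i + α.getD i 0 := by
  unfold bsum
  rw [List.getD_eq_getElem _ _ h]
  rw [List.sum_take_succ _ _ h]

lemma bsum_mono {i i' : ℕ} (h : i ≤ i') : bsum α i ≤ bsum α i' := by
  unfold bsum
  induction i' with
  | zero => simp at h; simp [h]
  | succ k ih =>
    rcases Nat.lt_or_ge i (k+1) with hlt | hge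
    · by_cases hk : k < α.length
      · calc (α.take i).sum ≤ (α.take k).sum := ih (by omega)
          _ ≤ (α.take (k+1)).sum := by
              have := bsum_succ (α := α) hk
              unfold bsum at this; omega
      · have : α.take (k+1) = α.take k := by
          rw [List.take_of_length_le (by omega), List.take_of_length_le (by omega)]
        rw [this]; exact ih (by omega)
    · have : i = k + 1 := by omega
      subst this; rfl

lemma bsum_le_sum (i : ℕ) : bsum α i ≤ α.sum := by
  unfold bsum
  conv_rhs => rw [← List.take_append_drop i α]
  rw [List.sum_append]; omega

lemma bsum_lt_of_cell {i i' : ℕ} (h : IsCell α (i, 0)) (hii' : i < i') :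
    bsum α i < bsum α i' := by
  have h1 : bsum α (i+1) = bsum α i + α.getD i 0 := bsum_succ h.1
  have h2 : 0 < α.getD i 0 := h.2
  have := bsum_mono (α := α) (show i + 1 ≤ i' by omega)
  omega

lemma isCell_iff {i j : ℕ} : IsCell α (i, j) ↔ i < α.length ∧ j < α.getD i 0 := Iff.rfl

/-- value of a cell in the row-superstandard tableau -/
lemma srow_val {c : ℕ × ℕ} (h : IsCell α c) :
    Srow α c = bsum α c.1 + c.2 + 1 := by
  simp [Srow, h, bsum]

lemma srow_val' {i j : ℕ} (h : IsCell α (i, j)) :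
    Srow α (i, j) = bsum α i + j + 1 := srow_val h

lemma srval_le {i j : ℕ} (h : IsCell α (i, j)) : bsum α i + j + 1 ≤ α.sum := by
  have h1 : bsum α (i+1) = bsum α i + α.getD i 0 := bsum_succ h.1
  have h2 : j < α.getD i 0 := h.2
  have h3 := bsum_le_sum (α := α) (i+1)
  omega

lemma srval_inj {i j i' j' : ℕ} (h : IsCell α (i, j)) (h' : IsCell α (i', j'))
    (he : bsum α i + j = bsum α i' + j') : i = i' ∧ j = j' := by
  rcases Nat.lt_trichotomy i i' with hlt | heq | hgt
  · exfalso
    have h1 : bsum α (i+1) = bsum α i + α.getD i 0 := bsum_succ h.1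
    have := bsum_mono (α := α) (show i + 1 ≤ i' by omega)
    have h2 : j < α.getD i 0 := h.2
    omega
  · subst heq; omega
  · exfalso
    have h1 : bsum α (i'+1) = bsum α i' + α.getD i' 0 := bsum_succ h'.1
    have := bsum_mono (α := α) (show i' + 1 ≤ i by omega)
    have h2 : j' < α.getD i' 0 := h'.2
    omega

lemma exists_srow_cell : ∀ (α : List ℕ) (m : ℕ), 1 ≤ m → m ≤ α.sum →
    ∃ i j, IsCell α (i, j) ∧ m = bsum α i + j + 1 := by
  intro α
  induction α with
  | nil => intro m h1 h2; simp at h2; omega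
  | cons a α' ih =>
    intro m h1 h2
    rcases le_or_gt m a with hle | hlt
    · exact ⟨0, m - 1, ⟨by simp, by simpa using by omega⟩, by simp [bsum]; omega⟩
    · have hsum : (a :: α').sum = a + α'.sum := by simp
      obtain ⟨i, j, hc, hv⟩ := ih (m - a) (by omega) (by omega)
      refine ⟨i + 1, j, ⟨by simpa using hc.1, by simpa using hc.2⟩, ?_⟩
      have : bsum (a :: α') (i + 1) = a + bsum α' i := by
        simp [bsum, List.take_succ_cons]
      omega

lemma srow_isStd : IsStdFilling α (Srow α) := by
  refine ⟨fun c hc => by simp [Srow, hc], fun c hc => ?_, fun c c' hc hc' he => ?_, fun m h1 h2 => ?_⟩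
  · rw [srow_val hc]
    refine ⟨by omega, ?_⟩
    have := srval_le (i := c.1) (j := c.2) (by exact hc)
    omega
  · rw [srow_val hc, srow_val hc'] at he
    have := srval_inj (i := c.1) (j := c.2) (i' := c'.1) (j' := c'.2) hc hc' (by omega)
    exact Prod.ext this.1 this.2
  · obtain ⟨i, j, hc, hv⟩ := exists_srow_cell α m h1 h2
    exact ⟨(i, j), hc, by rw [srow_val' hc]; omega⟩

lemma srow_isSIT : IsSIT α (Srow α) := by
  refine ⟨srow_isStd, fun i i' hc hc' hii' => ?_, fun i j j' hc hc' hjj' => ?_⟩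
  · rw [srow_val' hc, srow_val' hc']
    have := bsum_lt_of_cell hc hii'
    omega
  · rw [srow_val' hc, srow_val' hc']
    omega

lemma srow_not_below (m : ℕ) : ¬ SuccBelow α (Srow α) m := by
  rintro ⟨c, c', hc, hc', hm, hm', hlt⟩
  rw [srow_val hc] at hm; rw [srow_val hc'] at hm'
  have h1 : bsum α (c'.1 + 1) = bsum α c'.1 + α.getD c'.1 0 := bsum_succ hc'.1
  have h2 : c'.2 < α.getD c'.1 0 := hc'.2
  have := bsum_mono (α := α) (show c'.1 + 1 ≤ c.1 by omega)
  omega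

end Aux
section Succ

variable {α : List ℕ} {T : Filling} {m : ℕ}

lemma succAbove_iff (hT : IsStdFilling α T) {c c' : ℕ × ℕ}
    (hc : IsCell α c) (hc' : IsCell α c') (hm : T c = m) (hm' : T c' = m + 1) :
    SuccAbove α T m ↔ c.1 < c'.1 := by
  constructor
  · rintro ⟨d, d', hd, hd', hdm, hdm', hlt⟩
    have e1 : d = c := hT.2.2.1 d c hd hc (by omega)
    have e2 : d' = c' := hT.2.2.1 d' c' hd' hc' (by omega)
    subst e1; subst e2; omega
  · intro h; exact ⟨c, c', hc, hc', hm, hm', h⟩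

lemma succSameRow_iff (hT : IsStdFilling α T) {c c' : ℕ × ℕ}
    (hc : IsCell α c) (hc' : IsCell α c') (hm : T c = m) (hm' : T c' = m + 1) :
    SuccSameRow α T m ↔ c.1 = c'.1 := by
  constructor
  · rintro ⟨d, d', hd, hd', hdm, hdm', hlt⟩
    have e1 : d = c := hT.2.2.1 d c hd hc (by omega)
    have e2 : d' = c' := hT.2.2.1 d' c' hd' hc' (by omega)
    subst e1; subst e2; omega
  · intro h; exact ⟨c, c', hc, hc', hm, hm', h⟩

lemma succBelow_iff (hT : IsStdFilling α T) {c c' : ℕ × ℕ}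
    (hc : IsCell α c) (hc' : IsCell α c') (hm : T c = m) (hm' : T c' = m + 1) :
    SuccBelow α T m ↔ c'.1 < c.1 := by
  constructor
  · rintro ⟨d, d', hd, hd', hdm, hdm', hlt⟩
    have e1 : d = c := hT.2.2.1 d c hd hc (by omega)
    have e2 : d' = c' := hT.2.2.1 d' c' hd' hc' (by omega)
    subst e1; subst e2; omega
  · intro h; exact ⟨c, c', hc, hc', hm, hm', h⟩

/-- the two cells carrying `m` and `m+1` -/
lemma exists_succ_cells (hT : IsStdFilling α T) (h1 : 1 ≤ m) (h2 : m + 1 ≤ α.sum) :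
    ∃ c c', IsCell α c ∧ IsCell α c' ∧ T c = m ∧ T c' = m + 1 := by
  obtain ⟨c, hc, hcm⟩ := hT.2.2.2 m h1 (by omega)
  obtain ⟨c', hc', hcm'⟩ := hT.2.2.2 (m+1) (by omega) h2
  exact ⟨c, c', hc, hc', hcm, hcm'⟩

lemma succ_trichotomy (hT : IsStdFilling α T) (h1 : 1 ≤ m) (h2 : m + 1 ≤ α.sum) :
    SuccAbove α T m ∨ SuccSameRow α T m ∨ SuccBelow α T m := by
  obtain ⟨c, c', hc, hc', hm, hm'⟩ := exists_succ_cells hT h1 h2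
  rcases Nat.lt_trichotomy c.1 c'.1 with h | h | h
  · exact Or.inl ((succAbove_iff hT hc hc' hm hm').2 h)
  · exact Or.inr (Or.inl ((succSameRow_iff hT hc hc' hm hm').2 h))
  · exact Or.inr (Or.inr ((succBelow_iff hT hc hc' hm hm').2 h))

lemma bounds_of_above (hT : IsStdFilling α T) (h : SuccAbove α T m) :
    1 ≤ m ∧ m + 1 ≤ α.sum := by
  obtain ⟨c, c', hc, hc', hm, hm', _⟩ := h
  have b1 := hT.2.1 c hc; have b2 := hT.2.1 c' hc'; omega

lemma bounds_of_same (hT : IsStdFilling α T) (h : SuccSameRow α T m) :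
    1 ≤ m ∧ m + 1 ≤ α.sum := by
  obtain ⟨c, c', hc, hc', hm, hm', _⟩ := h
  have b1 := hT.2.1 c hc; have b2 := hT.2.1 c' hc'; omega

lemma bounds_of_below (hT : IsStdFilling α T) (h : SuccBelow α T m) :
    1 ≤ m ∧ m + 1 ≤ α.sum := by
  obtain ⟨c, c', hc, hc', hm, hm', _⟩ := h
  have b1 := hT.2.1 c hc; have b2 := hT.2.1 c' hc'; omega

lemma above_not_same (hT : IsStdFilling α T) (h : SuccAbove α T m) :
    ¬ SuccSameRow α T m := by
  obtain ⟨c, c', hc, hc', hm, hm', hlt⟩ := h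
  rw [succSameRow_iff hT hc hc' hm hm']; omega

lemma above_not_below (hT : IsStdFilling α T) (h : SuccAbove α T m) :
    ¬ SuccBelow α T m := by
  obtain ⟨c, c', hc, hc', hm, hm', hlt⟩ := h
  rw [succBelow_iff hT hc hc' hm hm']; omega

lemma below_not_above (hT : IsStdFilling α T) (h : SuccBelow α T m) :
    ¬ SuccAbove α T m := by
  obtain ⟨c, c', hc, hc', hm, hm', hlt⟩ := h
  rw [succAbove_iff hT hc hc' hm hm']; omega

lemma below_not_same (hT : IsStdFilling α T) (h : SuccBelow α T m) :
    ¬ SuccSameRow α T m := by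
  obtain ⟨c, c', hc, hc', hm, hm', hlt⟩ := h
  rw [succSameRow_iff hT hc hc' hm hm']; omega

lemma same_not_above (hT : IsStdFilling α T) (h : SuccSameRow α T m) :
    ¬ SuccAbove α T m := by
  obtain ⟨c, c', hc, hc', hm, hm', hlt⟩ := h
  rw [succAbove_iff hT hc hc' hm hm']; omega

end Succ

section Swap

variable {α : List ℕ} {T : Filling} {m : ℕ}

/-- the value transposition -/
def tau (m v : ℕ) : ℕ := if v = m then m + 1 else if v = m + 1 then m else v

lemma swapEntries_eq_tau : swapEntries m T = fun c => tau m (T c) := rfl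

lemma tau_tau (m v : ℕ) : tau m (tau m v) = v := by
  unfold tau; split_ifs <;> first | omega | exact False.elim ‹False›

lemma tau_inj {m a b : ℕ} (h : tau m a = tau m b) : a = b := by
  unfold tau at h; split_ifs at h <;> omega

lemma tau_lt {m a b : ℕ} (hab : a < b) (hno : ¬ (a = m ∧ b = m + 1)) :
    tau m a < tau m b := by
  unfold tau; split_ifs <;> first | omega | exact False.elim ‹False›

lemma swap_swap (m : ℕ) (T : Filling) : swapEntries m (swapEntries m T) = T := by
  funext c
  rw [swapEntries_eq_tau, swapEntries_eq_tau]
  exact tau_tau m (T c)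

lemma swap_isStd (hT : IsStdFilling α T) (h1 : 1 ≤ m) (h2 : m + 1 ≤ α.sum) :
    IsStdFilling α (swapEntries m T) := by
  rw [swapEntries_eq_tau]
  refine ⟨fun c hc => ?_, fun c hc => ?_, fun c c' hc hc' he => ?_, fun k hk1 hk2 => ?_⟩
  · show tau m (T c) = 0
    rw [hT.1 c hc]; unfold tau; split_ifs <;> first | omega | exact False.elim ‹False›
  · show 1 ≤ tau m (T c) ∧ tau m (T c) ≤ α.sum
    have := hT.2.1 c hc; unfold tau; split_ifs <;> first | omega | exact False.elim ‹False›
  · exact hT.2.2.1 c c' hc hc' (tau_inj he)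
  · obtain ⟨c, hc, hcv⟩ := hT.2.2.2 (tau m k)
      (by unfold tau; split_ifs <;> first | omega | exact False.elim ‹False›) (by unfold tau; split_ifs <;> first | omega | exact False.elim ‹False›)
    refine ⟨c, hc, ?_⟩
    show tau m (T c) = k
    rw [hcv]; exact tau_tau m k

lemma swap_val_m {c : ℕ × ℕ} (hm : T c = m) : swapEntries m T c = m + 1 := by
  simp [swapEntries, hm]

lemma swap_val_m1 {c : ℕ × ℕ} (hm : T c = m + 1) : swapEntries m T c = m := by
  have : T c ≠ m := by omega
  simp [swapEntries, hm, this]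

/-- swapping a descent pair (m+1 strictly below m) preserves SIT -/
lemma swap_isSIT_of_below (hT : IsSIT α T) (h : SuccBelow α T m) :
    IsSIT α (swapEntries m T) := by
  obtain ⟨c, c', hc, hc', hm, hm', hlt⟩ := h
  have h1 : 1 ≤ m := by have := hT.1.2.1 c hc; omega
  have h2 : m + 1 ≤ α.sum := by have := hT.1.2.1 c' hc'; omega
  refine ⟨swap_isStd hT.1 h1 h2, fun i i' hci hci' hii' => ?_, fun i j j' hci hci' hjj' => ?_⟩
  · show tau m (T (i,0)) < tau m (T (i',0))
    apply tau_lt (hT.2.1 i i' hci hci' hii')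
    rintro ⟨e1, e2⟩
    have q1 : (i, 0) = c := hT.1.2.2.1 _ _ hci hc (by omega)
    have q2 : (i', 0) = c' := hT.1.2.2.1 _ _ hci' hc' (by omega)
    rw [← q1, ← q2] at hlt
    simp at hlt
    omega
  · show tau m (T (i,j)) < tau m (T (i,j')) 
    apply tau_lt (hT.2.2 i j j' hci hci' hjj')
    rintro ⟨e1, e2⟩
    have q1 : (i, j) = c := hT.1.2.2.1 _ _ hci hc (by omega)
    have q2 : (i, j') = c' := hT.1.2.2.1 _ _ hci' hc' (by omega)
    rw [← q1, ← q2] at hlt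
    simp at hlt

lemma swap_above_of_below (h : SuccBelow α T m) :
    SuccAbove α (swapEntries m T) m := by
  obtain ⟨c, c', hc, hc', hm, hm', hlt⟩ := h
  exact ⟨c', c, hc', hc, swap_val_m1 hm', swap_val_m hm, hlt⟩

lemma swap_below_of_above (h : SuccAbove α T m) :
    SuccBelow α (swapEntries m T) m := by
  obtain ⟨c, c', hc, hc', hm, hm', hlt⟩ := h
  exact ⟨c', c, hc', hc, swap_val_m1 hm', swap_val_m hm, hlt⟩

lemma swap_ne_self (hT : IsStdFilling α T) (h1 : 1 ≤ m) (h2 : m + 1 ≤ α.sum) :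
    swapEntries m T ≠ T := by
  obtain ⟨c, hc, hcm⟩ := hT.2.2.2 m h1 (by omega)
  intro he
  have := swap_val_m (T := T) (m := m) hcm
  rw [he] at this
  omega

end Swap
section Mu

variable {α : List ℕ} {T : Filling} {m : ℕ}

/-- the grid of potential cells -/
noncomputable def grid (α : List ℕ) : Finset (ℕ × ℕ) :=
  Finset.range α.length ×ˢ Finset.range (α.sum + 1)

lemma getD_le_sum {i : ℕ} (h : i < α.length) : α.getD i 0 ≤ α.sum := by
  have h1 : bsum α (i+1) = bsum α i + α.getD i 0 := bsum_succ h
  have h2 := bsum_le_sum (α := α) (i+1)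
  omega

lemma cell_mem_grid {c : ℕ × ℕ} (hc : IsCell α c) : c ∈ grid α := by
  have := getD_le_sum (α := α) hc.1
  have := hc.2
  have h1 := hc.1
  have h2 := hc.2
  simp only [grid, Finset.mem_product, Finset.mem_range]
  omega

/-- the row statistic: sum over all cells of row index times entry -/
noncomputable def mu (α : List ℕ) (T : Filling) : ℕ :=
  ∑ p ∈ grid α, p.1 * T p

lemma mu_le (hT : IsStdFilling α T) :
    mu α T ≤ (α.length * (α.sum + 1)) * (α.length * α.sum) := by
  unfold mu
  calc ∑ p ∈ grid α, p.1 * T p ≤ ∑ _p ∈ grid α, α.length * α.sum := by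
        apply Finset.sum_le_sum
        intro p hp
        simp [grid, Finset.mem_product] at hp
        apply Nat.mul_le_mul (by omega)
        by_cases hc : IsCell α p
        · exact (hT.2.1 p hc).2
        · rw [hT.1 p hc]; omega
    _ ≤ _ := by
        rw [Finset.sum_const, smul_eq_mul]
        apply Nat.mul_le_mul_right
        calc (grid α).card = α.length * (α.sum + 1) := by simp [grid]
          _ ≤ _ := le_rfl

lemma mu_swap_lt (hT : IsStdFilling α T) (h : SuccBelow α T m) :
    mu α T < mu α (swapEntries m T) := by
  obtain ⟨c, c', hc, hc', hm, hm', hlt⟩ := h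
  have h1 : 1 ≤ m := by have := hT.2.1 c hc; omega
  have hcc' : c ≠ c' := by
    intro he; rw [he] at hm; omega
  have hgc := cell_mem_grid hc
  have hgc' := cell_mem_grid hc'
  -- values agree off c, c'
  have hoff : ∀ p, p ≠ c → p ≠ c' → swapEntries m T p = T p := by
    intro p hp hp'
    have hTp : T p ≠ m := by
      intro he
      by_cases hcp : IsCell α p
      · exact hp (hT.2.2.1 p c hcp hc (by omega))
      · rw [hT.1 p hcp] at he; omega
    have hTp' : T p ≠ m + 1 := by
      intro he
      by_cases hcp : IsCell α p
      · exact hp' (hT.2.2.1 p c' hcp hc' (by omega))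
      · rw [hT.1 p hcp] at he; omega
    simp [swapEntries, hTp, hTp']
  have split : ∀ (S : Filling),
      ∑ p ∈ grid α, p.1 * S p
        = c.1 * S c + (c'.1 * S c' + ∑ p ∈ ((grid α).erase c).erase c', p.1 * S p) := by
    intro S
    rw [← Finset.add_sum_erase _ _ hgc]
    congr 1
    rw [← Finset.add_sum_erase _ _ (Finset.mem_erase.2 ⟨Ne.symm hcc', hgc'⟩)]
  have tails : ∑ p ∈ ((grid α).erase c).erase c', p.1 * swapEntries m T p
      = ∑ p ∈ ((grid α).erase c).erase c', p.1 * T p := by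
    apply Finset.sum_congr rfl
    intro p hp
    have h2 := Finset.mem_erase.1 hp
    have h3 := Finset.mem_erase.1 h2.2
    rw [hoff p h3.1 h2.1]
  unfold mu
  rw [split T, split (swapEntries m T), tails]
  rw [swap_val_m hm, swap_val_m1 hm', hm, hm']
  have e1 : c.1 * (m + 1) = c.1 * m + c.1 := by ring
  have e2 : c'.1 * (m + 1) = c'.1 * m + c'.1 := by ring
  omega

end Mu
section Rigid

variable {α : List ℕ} {T : Filling}

lemma srval_ge_of_val {m : ℕ} (hT : IsSIT α T)
    (IH : ∀ x : ℕ × ℕ, IsCell α x → bsum α x.1 + x.2 + 1 < m → T x = bsum α x.1 + x.2 + 1)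
    {cm : ℕ × ℕ} (hcm : IsCell α cm) (hv : T cm = m) :
    m ≤ bsum α cm.1 + cm.2 + 1 := by
  by_contra hlt
  have := IH cm hcm (by omega)
  omega

/-- any cell whose value is smaller than the induction frontier carries its
row-superstandard value -/
lemma srval_eq_of_val_lt {m : ℕ} (hT : IsSIT α T)
    (IH : ∀ x : ℕ × ℕ, IsCell α x → bsum α x.1 + x.2 + 1 < m → T x = bsum α x.1 + x.2 + 1)
    {y : ℕ × ℕ} (hy : IsCell α y) (h1 : 1 ≤ T y) (h2 : T y < m) :
    bsum α y.1 + y.2 + 1 = T y := by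
  obtain ⟨i, j, hc, hval⟩ := exists_srow_cell α (T y) h1 (by
    have := hT.1.2.1 y hy; omega)
  have p1 : ((i, j) : ℕ × ℕ).1 = i := rfl
  have p2 : ((i, j) : ℕ × ℕ).2 = j := rfl
  have hz : T (i, j) = T y := by
    have h3 : bsum α ((i,j) : ℕ × ℕ).1 + ((i,j) : ℕ × ℕ).2 + 1 < m := by dsimp only; omega
    have h4 := IH (i, j) hc h3
    dsimp only at h4
    omega
  have : (i, j) = y := hT.1.2.2.1 _ _ hc hy hz
  rw [← this]
  dsimp only
  omega

/-- core rigidity induction -/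
lemma srow_rigid_core (hT : IsSIT α T)
    (H : ∀ m : ℕ, 1 ≤ m → m ≤ α.sum →
        (∀ x : ℕ × ℕ, IsCell α x → bsum α x.1 + x.2 + 1 < m → T x = bsum α x.1 + x.2 + 1) →
        ∀ i j : ℕ, IsCell α (i, j) → m = bsum α i + j + 1 → 1 ≤ j →
        ∀ cm : ℕ × ℕ, IsCell α cm → T cm = m → cm.2 = 0 → i < cm.1 → False) :
    T = Srow α := by
  have K : ∀ m, ∀ x : ℕ × ℕ, IsCell α x → bsum α x.1 + x.2 + 1 ≤ m →
      T x = bsum α x.1 + x.2 + 1 := by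
    intro m
    induction m with
    | zero => intro x hx hle; omega
    | succ m IHm =>
      intro x hx hle
      rcases Nat.lt_or_ge (bsum α x.1 + x.2 + 1) (m+1) with hlt | hge
      · exact IHm x hx (by omega)
      have hM : bsum α x.1 + x.2 + 1 = m + 1 := by omega
      set M := m + 1 with hMdef
      have IH' : ∀ y : ℕ × ℕ, IsCell α y → bsum α y.1 + y.2 + 1 < M →
          T y = bsum α y.1 + y.2 + 1 := fun y hy hlt => IHm y hy (by omega)
      have hM1 : 1 ≤ M := by omega
      have hMs : M ≤ α.sum := by
        have := srval_le (i := x.1) (j := x.2) (by exact hx); omega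
      obtain ⟨cm, hcm, hvcm⟩ := hT.1.2.2.2 M hM1 hMs
      -- suffices cm = x
      suffices hcx : cm = x by
        rw [← hcx, hvcm, hcx, hM]
      have hub := srval_ge_of_val hT IH' hcm hvcm
      rcases Nat.eq_zero_or_pos cm.2 with hc2 | hc2
      · -- cm in the first column
        rcases Nat.eq_zero_or_pos x.2 with hx2 | hx2
        · -- target также first column: hypothesis-free
          have hcmx : cm.1 = x.1 := by
            rcases Nat.lt_trichotomy cm.1 x.1 with hlt1 | he | hgt1
            · exfalso
              have hcell : IsCell α (cm.1, 0) := by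
                rw [← hc2]; exact hcm
              have := bsum_lt_of_cell hcell hlt1
              omega
            · exact he
            · exfalso
              -- T x < T cm = M, but srval x = M
              have hxcell0 : IsCell α (x.1, 0) := by rw [← hx2]; exact hx
              have hlt2 : T (x.1, 0) < T (cm.1, 0) := hT.2.1 x.1 cm.1 hxcell0 (by rw [← hc2]; exact hcm) hgt1
              have hcmpair : cm = (cm.1, 0) := by rw [← hc2]
              have hxpair : x = (x.1, 0) := by rw [← hx2]
              rw [← hcmpair, hvcm] at hlt2
              have hb1 : 1 ≤ T (x.1, 0) := by
                have := hT.1.2.1 _ hxcell0; omega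
              have := srval_eq_of_val_lt hT IH' hxcell0 hb1 (by omega)
              dsimp only at this
              omega
          have e1 : cm.1 = x.1 := hcmx
          have e2 : cm.2 = x.2 := by omega
          calc cm = (cm.1, cm.2) := rfl
            _ = (x.1, x.2) := by rw [e1, e2]
            _ = x := rfl
        · -- target not first column: use H
          exfalso
          have hicm : x.1 < cm.1 := by
            by_contra hle2
            have := bsum_mono (α := α) (show cm.1 ≤ x.1 by omega)
            omega
          have hxp : x = (x.1, x.2) := rfl
          exact H M hM1 hMs IH' x.1 x.2 (by rw [← hxp]; exact hx) (by omega) (by omega)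
            cm hcm hvcm (by omega) hicm
      · -- cm not in first column: hypothesis-free
        obtain ⟨hcm1, hcm2'⟩ := isCell_iff.1 (show IsCell α (cm.1, cm.2) from hcm)
        have hycell : IsCell α (cm.1, cm.2 - 1) := isCell_iff.2 ⟨hcm1, by omega⟩
        have hcmpair : cm = (cm.1, cm.2) := rfl
        have hlt2 : T (cm.1, cm.2 - 1) < T cm := by
          conv_rhs => rw [hcmpair]
          exact hT.2.2 cm.1 (cm.2 - 1) cm.2 hycell (by rw [← hcmpair]; exact hcm) (by omega)
        have hb1 : 1 ≤ T (cm.1, cm.2 - 1) := by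
          have := hT.1.2.1 _ hycell; omega
        have hsv := srval_eq_of_val_lt hT IH' hycell hb1 (by omega)
        dsimp only at hsv
        -- so srval cm = T(y) + 1 ≤ M, combined with hub: srval cm = M
        have hsc : bsum α cm.1 + cm.2 + 1 = M := by omega
        have := srval_inj (i := cm.1) (j := cm.2) (i' := x.1) (j' := x.2)
          (by rw [← hcmpair]; exact hcm) (by exact hx) (by omega)
        have e1 : cm.1 = x.1 := by omega
        have e2 : cm.2 = x.2 := by omega
        calc cm = (cm.1, cm.2) := rfl
          _ = (x.1, x.2) := by rw [e1, e2]
          _ = x := rfl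
  funext c
  by_cases hc : IsCell α c
  · rw [srow_val hc]
    exact K α.sum c hc (srval_le (i := c.1) (j := c.2) hc)
  · rw [hT.1.1 c hc, (srow_isStd (α := α)).1 c hc]

/-- a SIT with no ascent outside the ascent set of `Srow` is `Srow` -/
lemma eq_srow_of_asc (hT : IsSIT α T)
    (h : ∀ m, SuccAbove α T m → SuccAbove α (Srow α) m) : T = Srow α := by
  apply srow_rigid_core hT
  intro m hm1 hms IH' i j hcell hval hj cm hcm hvcm hcm2 hicm
  obtain ⟨hcell1, hcell2'⟩ := isCell_iff.1 hcell
  have hycell : IsCell α (i, j - 1) := isCell_iff.2 ⟨hcell1, by omega⟩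
  have hyv : T (i, j - 1) = m - 1 := by
    rw [IH' (i, j-1) hycell (by dsimp only; omega)]
    dsimp only; omega
  have habove : SuccAbove α T (m - 1) := by
    refine ⟨(i, j-1), cm, hycell, hcm, hyv, by omega, by dsimp only; omega⟩
  have hsrow := h (m - 1) habove
  -- but m-1 and m are in the same row of Srow
  have hsy : Srow α (i, j - 1) = m - 1 := by
    rw [srow_val' hycell]; omega
  have hsx : Srow α (i, j) = m := by
    rw [srow_val' hcell]; omega
  have := (succAbove_iff (srow_isStd (α := α)) hycell hcell hsy (by omega)).1 hsrow
  dsimp only at this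
  omega

/-- a SIT with no descents is `Srow` -/
lemma eq_srow_of_no_below (hT : IsSIT α T)
    (h : ∀ m, ¬ SuccBelow α T m) : T = Srow α := by
  have row_mono : ∀ k k', 1 ≤ k → k ≤ k' → k' ≤ α.sum →
      ∀ xk xk' : ℕ × ℕ, IsCell α xk → IsCell α xk' → T xk = k → T xk' = k' →
      xk.1 ≤ xk'.1 := by
    intro k k' hk1 hkk' hks
    induction k' , hkk' using Nat.le_induction with
    | base =>
      intro xk xk' hc hc' hv hv'
      have : xk = xk' := hT.1.2.2.1 _ _ hc hc' (by omega)
      exact le_of_eq (by rw [this])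
    | succ k' hkk' IH =>
      intro xk xk' hc hc' hv hv'
      obtain ⟨z, hz, hzv⟩ := hT.1.2.2.2 k' (by omega) (by omega)
      have h1 : xk.1 ≤ z.1 := IH (by omega) xk z hc hz hv hzv
      have h2 : z.1 ≤ xk'.1 := by
        rcases succ_trichotomy (m := k') hT.1 (by omega) (by omega) with ha | hs | hb
        · have := (succAbove_iff hT.1 hz hc' hzv hv').1 ha; omega
        · have := (succSameRow_iff hT.1 hz hc' hzv hv').1 hs; omega
        · exact absurd hb (h k')
      omega
  apply srow_rigid_core hT
  intro m hm1 hms IH' i j hcell hval hj cm hcm hvcm hcm2 hicm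
  obtain ⟨hcell1, hcell2'⟩ := isCell_iff.1 hcell
  have hycell : IsCell α (i, j - 1) := isCell_iff.2 ⟨hcell1, by omega⟩
  have hyv : T (i, j - 1) = m - 1 := by
    rw [IH' (i, j-1) hycell (by dsimp only; omega)]
    dsimp only; omega
  -- value v at the target cell (i,j)
  set v := T (i, j) with hvdef
  have hv1 : 1 ≤ v := (hT.1.2.1 _ hcell).1
  have hvs : v ≤ α.sum := (hT.1.2.1 _ hcell).2
  have hvgt : m - 1 < v := by
    have : T (i, j - 1) < T (i, j) := hT.2.2 i (j-1) j hycell hcell (by omega)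
    omega
  have hvne : v ≠ m := by
    intro he
    have : (i, j) = cm := hT.1.2.2.1 _ _ hcell hcm (by omega)
    have : j = cm.2 := by rw [← this]
    omega
  have := row_mono m v (by omega) (by omega) hvs cm (i, j) hcm hcell hvcm rfl
  dsimp only at this
  omega

end Rigid
section LinAlg

variable {α : List ℕ} {m : ℕ}

/-- the basis type -/
abbrev SITB (α : List ℕ) := {T : Filling // IsSIT α T}

lemma piTarget_above (X : SITB α) (h : SuccAbove α X.1 m) :
    piTargetRS α m X = Finsupp.single X 1 := by
  have h1 : piRS α m (some X.1) = some X.1 := by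
    simp only [piRS]; rw [if_pos h]
  unfold piTargetRS
  rw [h1]
  dsimp only
  rw [dif_pos X.2]

lemma piTarget_same (X : SITB α) (h : SuccSameRow α X.1 m) :
    piTargetRS α m X = 0 := by
  have h1 : piRS α m (some X.1) = none := by
    simp only [piRS]
    rw [if_neg (same_not_above X.2.1 h), if_pos h]
  unfold piTargetRS
  rw [h1]

lemma piTarget_below (X : SITB α) (h : SuccBelow α X.1 m) :
    piTargetRS α m X
      = Finsupp.single ⟨swapEntries m X.1, swap_isSIT_of_below X.2 h⟩ 1 := by
  have h1 : piRS α m (some X.1) = some (swapEntries m X.1) := by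
    simp only [piRS]
    rw [if_neg (below_not_above X.2.1 h), if_neg (below_not_same X.2.1 h)]
  unfold piTargetRS
  rw [h1]
  dsimp only
  rw [dif_pos (swap_isSIT_of_below X.2 h)]

lemma piRSLin_apply_coeff (g : SITB α →₀ ℚ) (U : SITB α) :
    (piRSLin α m g) U = ∑ X ∈ g.support, g X * (piTargetRS α m X) U := by
  simp [piRSLin, Finsupp.lsum_apply, Finsupp.sum_apply, LinearMap.toSpanSingleton_apply,
    Finsupp.sum, Finsupp.smul_apply, smul_eq_mul]

lemma piRSLin_single (X : SITB α) :
    piRSLin α m (Finsupp.single X 1) = piTargetRS α m X := by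
  simp [piRSLin]

lemma piTarget_coeff_ne {X U : SITB α} (h : (piTargetRS α m X) U ≠ 0) :
    (SuccAbove α X.1 m ∧ X = U) ∨
      (¬ SuccAbove α X.1 m ∧ ¬ SuccSameRow α X.1 m ∧ X.1 = swapEntries m U.1) := by
  by_cases hA : SuccAbove α X.1 m
  · left
    refine ⟨hA, ?_⟩
    rw [piTarget_above X hA, Finsupp.single_apply] at h
    by_contra hne
    rw [if_neg hne] at h
    exact h rfl
  · by_cases hS : SuccSameRow α X.1 m
    · rw [piTarget_same X hS] at h
      exact absurd rfl h
    · right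
      refine ⟨hA, hS, ?_⟩
      have h1 : piRS α m (some X.1) = some (swapEntries m X.1) := by
        simp only [piRS]; rw [if_neg hA, if_neg hS]
      unfold piTargetRS at h
      rw [h1] at h
      dsimp only at h
      by_cases hsit : IsSIT α (swapEntries m X.1)
      · rw [dif_pos hsit, Finsupp.single_apply] at h
        by_cases he : (⟨swapEntries m X.1, hsit⟩ : SITB α) = U
        · have := congrArg Subtype.val he
          dsimp only at this
          rw [← this, swap_swap]
        · rw [if_neg he] at h
          exact absurd rfl h
      · rw [dif_neg hsit] at h
        exact absurd rfl h

lemma coeff_zero_of_fix (hm1 : 1 ≤ m) (hm2 : m + 1 ≤ α.sum)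
    {g : SITB α →₀ ℚ} (hfix : piRSLin α m g = g) {U : SITB α}
    (hU : ¬ SuccAbove α U.1 m) : g U = 0 := by
  have h : g U = ∑ X ∈ g.support, g X * (piTargetRS α m X) U := by
    conv_lhs => rw [← hfix]
    exact piRSLin_apply_coeff g U
  rw [h]
  apply Finset.sum_eq_zero
  intro X hX
  rcases eq_or_ne ((piTargetRS α m X) U) 0 with h0 | h0
  · rw [h0, mul_zero]
  exfalso
  rcases piTarget_coeff_ne h0 with ⟨hA, he⟩ | ⟨hA, hS, he⟩
  · exact hU (he ▸ hA)
  · rcases succ_trichotomy (T := X.1) (m := m) X.2.1 hm1 hm2 with h' | h' | h'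
    · exact hA h'
    · exact hS h'
    · apply hU
      have := swap_above_of_below h'
      rw [he, swap_swap] at this
      exact this

lemma kill_rel (hm1 : 1 ≤ m) (hm2 : m + 1 ≤ α.sum)
    {g : SITB α →₀ ℚ} (hkill : piRSLin α m g = 0) {Y : SITB α}
    (hY : SuccAbove α Y.1 m) :
    g Y + (if h : IsSIT α (swapEntries m Y.1) then g ⟨swapEntries m Y.1, h⟩ else 0) = 0 := by
  have h0 : (0 : ℚ) = ∑ X ∈ g.support, g X * (piTargetRS α m X) Y := by
    have h1 := piRSLin_apply_coeff (m := m) g Y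
    rw [hkill] at h1
    simp only [Finsupp.coe_zero, Pi.zero_apply] at h1
    exact h1
  have hYY : (piTargetRS α m Y) Y = 1 := by
    rw [piTarget_above Y hY, Finsupp.single_apply, if_pos rfl]
  by_cases hs : IsSIT α (swapEntries m Y.1)
  · set W : SITB α := ⟨swapEntries m Y.1, hs⟩ with hWdef
    have hBW : SuccBelow α W.1 m := swap_below_of_above hY
    have hWY : W ≠ Y := by
      intro he
      exact swap_ne_self Y.2.1 hm1 hm2 (congrArg Subtype.val he)
    have hWYc : (piTargetRS α m W) Y = 1 := by
      rw [piTarget_below W hBW]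
      have he : (⟨swapEntries m W.1, swap_isSIT_of_below W.2 hBW⟩ : SITB α) = Y := by
        apply Subtype.ext
        show swapEntries m W.1 = Y.1
        rw [hWdef]
        exact swap_swap m Y.1
      rw [he, Finsupp.single_apply, if_pos rfl]
    have hterm : ∀ X ∈ g.support ∪ ({Y, W} : Finset (SITB α)), X ∉ ({Y, W} : Finset (SITB α)) →
        g X * (piTargetRS α m X) Y = 0 := by
      intro X _ hXn
      simp only [Finset.mem_insert, Finset.mem_singleton] at hXn
      push_neg at hXn
      rcases eq_or_ne ((piTargetRS α m X) Y) 0 with hz | hz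
      · rw [hz, mul_zero]
      exfalso
      rcases piTarget_coeff_ne hz with ⟨hA, he⟩ | ⟨hA, hS, he⟩
      · exact hXn.1 he
      · exact hXn.2 (Subtype.ext he)
    have e1 : ∑ X ∈ g.support, g X * (piTargetRS α m X) Y
        = ∑ X ∈ g.support ∪ ({Y, W} : Finset (SITB α)), g X * (piTargetRS α m X) Y := by
      apply Finset.sum_subset Finset.subset_union_left
      intro x _ hxn
      rw [Finsupp.notMem_support_iff.1 hxn, zero_mul]
    have e2 : ∑ X ∈ g.support ∪ ({Y, W} : Finset (SITB α)), g X * (piTargetRS α m X) Y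
        = ∑ X ∈ ({Y, W} : Finset (SITB α)), g X * (piTargetRS α m X) Y := by
      symm
      apply Finset.sum_subset Finset.subset_union_right
      exact hterm
    have e3 : ∑ X ∈ ({Y, W} : Finset (SITB α)), g X * (piTargetRS α m X) Y
        = g Y * 1 + g W * 1 := by
      rw [Finset.sum_pair (Ne.symm hWY), hYY, hWYc]
    rw [e1, e2, e3] at h0
    rw [dif_pos hs]
    have : g W = g ⟨swapEntries m Y.1, hs⟩ := rfl
    rw [← this]
    linarith
  · have hterm : ∀ X ∈ g.support ∪ ({Y} : Finset (SITB α)), X ∉ ({Y} : Finset (SITB α)) →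
        g X * (piTargetRS α m X) Y = 0 := by
      intro X _ hXn
      simp only [Finset.mem_singleton] at hXn
      rcases eq_or_ne ((piTargetRS α m X) Y) 0 with hz | hz
      · rw [hz, mul_zero]
      exfalso
      rcases piTarget_coeff_ne hz with ⟨hA, he⟩ | ⟨hA, hS, he⟩
      · exact hXn he
      · exact hs (he ▸ X.2)
    have e1 : ∑ X ∈ g.support, g X * (piTargetRS α m X) Y
        = ∑ X ∈ g.support ∪ ({Y} : Finset (SITB α)), g X * (piTargetRS α m X) Y := by
      apply Finset.sum_subset Finset.subset_union_left
      intro x _ hxn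
      rw [Finsupp.notMem_support_iff.1 hxn, zero_mul]
    have e2 : ∑ X ∈ g.support ∪ ({Y} : Finset (SITB α)), g X * (piTargetRS α m X) Y
        = ∑ X ∈ ({Y} : Finset (SITB α)), g X * (piTargetRS α m X) Y := by
      symm
      apply Finset.sum_subset Finset.subset_union_right
      exact hterm
    rw [e1, e2, Finset.sum_singleton, hYY] at h0
    rw [dif_neg hs]
    linarith

end LinAlg
section Key

variable {α : List ℕ}

/-- bound for the `mu` statistic -/
noncomputable def muB (α : List ℕ) : ℕ := (α.length * (α.sum + 1)) * (α.length * α.sum)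

lemma key_lemma (P : ℕ → Prop) (g : SITB α →₀ ℚ)
    (hfix : ∀ m, 1 ≤ m → m + 1 ≤ α.sum → P m → piRSLin α m g = g)
    (hkill : ∀ m, 1 ≤ m → m + 1 ≤ α.sum → ¬ P m → piRSLin α m g = 0)
    (SR : SITB α) (hSR : SR.1 = Srow α)
    (hcase : g SR = 0 ∨ ∀ m, ¬ P m → ¬ SuccAbove α (Srow α) m) :
    ∀ U : SITB α, U ≠ SR → g U = 0 := by
  have H : ∀ k, ∀ U : SITB α, U ≠ SR → muB α - mu α U.1 ≤ k → g U = 0 := by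
    intro k
    induction k using Nat.strong_induction_on with
    | _ k IH =>
      intro U hUne hk
      by_cases hC1 : ∃ i, 1 ≤ i ∧ i + 1 ≤ α.sum ∧ P i ∧ ¬ SuccAbove α U.1 i
      · obtain ⟨i, h1, h2, hP, hnA⟩ := hC1
        exact coeff_zero_of_fix h1 h2 (hfix i h1 h2 hP) hnA
      · push_neg at hC1
        have hne : U.1 ≠ Srow α := fun he => hUne (Subtype.ext (he.trans hSR.symm))
        have hdesc : ∃ m, SuccBelow α U.1 m := by
          by_contra hnd
          push_neg at hnd
          exact hne (eq_srow_of_no_below U.2 hnd)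
        obtain ⟨m, hB⟩ := hdesc
        obtain ⟨h1, h2⟩ := bounds_of_below U.2.1 hB
        have hPm : ¬ P m := fun hP => (below_not_above U.2.1 hB) (hC1 m h1 h2 hP)
        have hsit := swap_isSIT_of_below U.2 hB
        set Y : SITB α := ⟨swapEntries m U.1, hsit⟩ with hYdef
        have hAY : SuccAbove α Y.1 m := swap_above_of_below hB
        have hrel := kill_rel h1 h2 (hkill m h1 h2 hPm) hAY
        have hswapY : swapEntries m Y.1 = U.1 := swap_swap m U.1
        have hdite : (if h : IsSIT α (swapEntries m Y.1) then g ⟨swapEntries m Y.1, h⟩ else 0)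
            = g U := by
          rw [dif_pos (hswapY ▸ U.2)]
          congr 1
          exact Subtype.ext hswapY
        rw [hdite] at hrel
        by_cases hYS : Y = SR
        · rcases hcase with hg0 | hall
          · rw [hYS, hg0] at hrel; linarith
          · exfalso
            apply hall m hPm
            rw [← hSR, ← hYS]
            exact hAY
        · have hmu : mu α U.1 < mu α Y.1 := mu_swap_lt U.2.1 hB
          have hmuY : mu α Y.1 ≤ muB α := mu_le Y.2.1
          have hgY : g Y = 0 := by
            apply IH (muB α - mu α Y.1) (by omega) Y hYS (le_refl _)
          rw [hgY] at hrel
          linarith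
  intro U hU
  exact H (muB α) U hU (by omega)

end Key
theorem V_indecomposable (n : ℕ) (α : List ℕ) (hα : IsComposition α n)
    (f : ({T : Filling // IsSIT α T} →₀ ℚ) →ₗ[ℚ] ({T : Filling // IsSIT α T} →₀ ℚ))
    (hidem : f ∘ₗ f = f)
    (hcomm : ∀ i, 1 ≤ i → i ≤ n - 1 → f ∘ₗ piRSLin α i = piRSLin α i ∘ₗ f) :
    f = 0 ∨ f = LinearMap.id := by
  obtain ⟨hpos, hsum⟩ := hα
  subst hsum
  set SR : SITB α := ⟨Srow α, srow_isSIT⟩ with hSRdef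
  have hSR : SR.1 = Srow α := rfl
  have hcomm' : ∀ m, 1 ≤ m → m + 1 ≤ α.sum →
      ∀ v : SITB α →₀ ℚ, f (piRSLin α m v) = piRSLin α m (f v) := by
    intro m h1 h2 v
    have h := hcomm m h1 (by omega)
    have := congrArg (fun (L : (SITB α →₀ ℚ) →ₗ[ℚ] (SITB α →₀ ℚ)) => L v) h
    simpa using this
  set a : ℚ := (f (Finsupp.single SR 1)) SR with hadef
  -- Step 1 : f fixes the Srow line up to the scalar a
  have claim1 : f (Finsupp.single SR 1) = a • Finsupp.single SR 1 := by
    set g := f (Finsupp.single SR 1) with hgdef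
    have hfix : ∀ m, 1 ≤ m → m + 1 ≤ α.sum → SuccAbove α (Srow α) m →
        piRSLin α m g = g := by
      intro m h1 h2 hA
      have he : piRSLin α m (Finsupp.single SR 1) = Finsupp.single SR 1 := by
        rw [piRSLin_single, piTarget_above SR hA]
      rw [hgdef, ← hcomm' m h1 h2, he]
    have hkill : ∀ m, 1 ≤ m → m + 1 ≤ α.sum → ¬ SuccAbove α (Srow α) m →
        piRSLin α m g = 0 := by
      intro m h1 h2 hnA
      have hsame : SuccSameRow α (Srow α) m := by
        rcases succ_trichotomy (T := Srow α) (srow_isStd) h1 h2 with h' | h' | h'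
        · exact absurd h' hnA
        · exact h'
        · exact absurd h' (srow_not_below m)
      have he : piRSLin α m (Finsupp.single SR 1) = 0 := by
        rw [piRSLin_single, piTarget_same SR hsame]
      rw [hgdef, ← hcomm' m h1 h2, he, map_zero]
    have hz := key_lemma (SuccAbove α (Srow α)) g hfix hkill SR hSR
      (Or.inr (fun m hm => hm)) 
    ext U
    by_cases hU : U = SR
    · subst hU
      rw [Finsupp.smul_apply, Finsupp.single_eq_same, smul_eq_mul, mul_one, hadef]
    · rw [hz U hU]
      rw [Finsupp.smul_apply, Finsupp.single_apply, if_neg (fun h => hU (by rw [← h]))]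
      simp
  -- Step 2 : f is scalar on every basis vector
  have claim2 : ∀ X : SITB α, f (Finsupp.single X 1) = a • Finsupp.single X 1 := by
    have H : ∀ k, ∀ X : SITB α, muB α - mu α X.1 ≤ k →
        f (Finsupp.single X 1) = a • Finsupp.single X 1 := by
      intro k
      induction k using Nat.strong_induction_on with
      | _ k IH =>
        intro X hk
        by_cases hXS : X = SR
        · subst hXS; exact claim1
        set g := f (Finsupp.single X 1) - a • Finsupp.single X 1 with hgdef
        have hfix : ∀ m, 1 ≤ m → m + 1 ≤ α.sum → SuccAbove α X.1 m →
            piRSLin α m g = g := by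
          intro m h1 h2 hA
          have he : piRSLin α m (Finsupp.single X 1) = Finsupp.single X 1 := by
            rw [piRSLin_single, piTarget_above X hA]
          rw [hgdef, map_sub, map_smul, he, ← hcomm' m h1 h2, he]
        have hkill : ∀ m, 1 ≤ m → m + 1 ≤ α.sum → ¬ SuccAbove α X.1 m →
            piRSLin α m g = 0 := by
          intro m h1 h2 hnA
          rcases succ_trichotomy (T := X.1) (m := m) X.2.1 h1 h2 with h' | h' | h'
          · exact absurd h' hnA
          · have he : piRSLin α m (Finsupp.single X 1) = 0 := by
              rw [piRSLin_single, piTarget_same X h']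
            rw [hgdef, map_sub, map_smul, he, ← hcomm' m h1 h2, he]
            simp
          · have hsit := swap_isSIT_of_below X.2 h'
            set Y : SITB α := ⟨swapEntries m X.1, hsit⟩ with hYdef
            have he : piRSLin α m (Finsupp.single X 1) = Finsupp.single Y 1 := by
              rw [piRSLin_single, piTarget_below X h']
            have hmu : mu α X.1 < mu α Y.1 := mu_swap_lt X.2.1 h'
            have hmuY : mu α Y.1 ≤ muB α := mu_le Y.2.1
            have hfY : f (Finsupp.single Y 1) = a • Finsupp.single Y 1 :=
              IH (muB α - mu α Y.1) (by omega) Y (le_refl _)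
            rw [hgdef, map_sub, map_smul, he, ← hcomm' m h1 h2, he, hfY]
            simp
        have hwit : ∃ m0, SuccAbove α X.1 m0 ∧ ¬ SuccAbove α (Srow α) m0 := by
          by_contra hno
          push_neg at hno
          exact hXS (Subtype.ext ((eq_srow_of_asc X.2 hno).trans hSR.symm))
        obtain ⟨m0, hA0, hnS0⟩ := hwit
        obtain ⟨hb1, hb2⟩ := bounds_of_above X.2.1 hA0
        have hgSR : g SR = 0 :=
          coeff_zero_of_fix hb1 hb2 (hfix m0 hb1 hb2 hA0) (by rw [hSR]; exact hnS0)
        have hz := key_lemma (SuccAbove α X.1) g hfix hkill SR hSR (Or.inl hgSR)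
        have hg0 : g = 0 := by
          ext U
          by_cases hU : U = SR
          · subst hU; simpa using hgSR
          · simpa using hz U hU
        have := sub_eq_zero.1 (by rw [← hgdef]; exact hg0)
        exact this
    intro X
    exact H (muB α) X (by omega)
  -- Step 3 : f = a • id
  have hfid : f = a • (LinearMap.id : (SITB α →₀ ℚ) →ₗ[ℚ] (SITB α →₀ ℚ)) := by
    apply Finsupp.lhom_ext
    intro X b
    have hb : Finsupp.single X b = b • Finsupp.single X 1 := by
      rw [Finsupp.smul_single, smul_eq_mul, mul_one]
    rw [hb, map_smul, claim2 X]
    simp only [LinearMap.smul_apply, LinearMap.id_apply]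
    rw [smul_comm]
  -- Step 4 : idempotency gives a ∈ {0, 1}
  have haa : a * a = a := by
    have h := congrArg (fun (L : (SITB α →₀ ℚ) →ₗ[ℚ] (SITB α →₀ ℚ)) =>
      (L (Finsupp.single SR 1)) SR) hidem
    simp only [LinearMap.comp_apply] at h
    rw [claim2 SR] at h
    rw [map_smul, claim2 SR] at h
    have h2 := h
    simp only [Finsupp.smul_apply, Finsupp.single_eq_same, smul_eq_mul, mul_one] at h2
    linarith [h2]
  have ha01 : a = 0 ∨ a = 1 := by
    rcases mul_eq_zero.1 (show a * (a - 1) = 0 by ring_nf; linarith [haa]) with h | h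
    · exact Or.inl h
    · exact Or.inr (by linarith)
  rcases ha01 with h | h
  · left; rw [hfid, h, zero_smul]
  · right; rw [hfid, h, one_smul]

end ImmHecke
end

section
/- Let α be a composition of n. If T ∈ SET(α) then for every 1 ≤ i ≤ n−1, π_i^{RS*}(T) ∈ SET(α) ∪ {0}; that is, the set SET(α) ⊆ SIT(α) is closed under the row-strict 0-Hecke operators. -/
open Classical

namespace ImmHecke

theorem SET_closed_under_piRS (n : ℕ) (α : List ℕ) (hα : IsComposition α n)
    (T : Filling) (hT : IsSET α T) (i : ℕ) (hi1 : 1 ≤ i) (hi2 : i ≤ n - 1) :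
    piRS α i (some T) = none ∨
      ∃ T', piRS α i (some T) = some T' ∧ IsSET α T' := by
  classical
  obtain ⟨hstd, hrow, hcol⟩ := hT
  obtain ⟨hoff, hrange, hinj, hsurj⟩ := hstd
  by_cases hA : SuccAbove α T i
  · right
    exact ⟨T, by simp [piRS, hA], ⟨⟨hoff, hrange, hinj, hsurj⟩, hrow, hcol⟩⟩
  by_cases hS : SuccSameRow α T i
  · left; simp [piRS, hA, hS]
  right
  refine ⟨swapEntries i T, by simp [piRS, hA, hS], ?_⟩
  have hn : α.sum = n := hα.2
  have hn2 : 2 ≤ n := by omega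
  obtain ⟨c, hcmem, hc⟩ := hsurj i hi1 (by omega)
  obtain ⟨c', hc'mem, hc'⟩ := hsurj (i + 1) (by omega) (by omega)
  have hbelow : c'.1 < c.1 := by
    rcases lt_trichotomy c.1 c'.1 with h | h | h
    · exact absurd ⟨c, c', hcmem, hc'mem, hc, hc', h⟩ hA
    · exact absurd ⟨c, c', hcmem, hc'mem, hc, hc', h⟩ hS
    · exact h
  have key : ∀ a b, IsCell α a → IsCell α b → T a < T b → ¬(a = c ∧ b = c') →
      swapEntries i T a < swapEntries i T b := by
    intro a b ha hb hlt hne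
    have hbad : ¬(T a = i ∧ T b = i + 1) := by
      rintro ⟨h1, h2⟩
      exact hne ⟨hinj a c ha hcmem (h1.trans hc.symm),
        hinj b c' hb hc'mem (h2.trans hc'.symm)⟩
    unfold swapEntries
    split_ifs <;> omega
  refine ⟨⟨?_, ?_, ?_, ?_⟩, ?_, ?_⟩
  · intro x hx
    have h0 : T x = 0 := hoff x hx
    have e1 : T x ≠ i := by omega
    have e2 : T x ≠ i + 1 := by omega
    have e1 : ¬(0 = i) := by omega
    have e2 : ¬(0 = i + 1) := by omega
    simp only [swapEntries, h0]
    rw [if_neg e1, if_neg e2]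
  · intro x hx
    have h1 := hrange x hx
    unfold swapEntries
    split_ifs <;> omega
  · intro x y hx hy h
    apply hinj x y hx hy
    unfold swapEntries at h
    split_ifs at h <;> omega
  · intro m hm1 hm2
    by_cases h1 : m = i
    · refine ⟨c', hc'mem, ?_⟩
      unfold swapEntries
      rw [hc']
      split_ifs <;> omega
    by_cases h2 : m = i + 1
    · refine ⟨c, hcmem, ?_⟩
      unfold swapEntries
      rw [hc]
      simp [h2]
    · obtain ⟨d, hd, hdm⟩ := hsurj m hm1 hm2
      refine ⟨d, hd, ?_⟩
      unfold swapEntries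
      rw [hdm]
      split_ifs <;> omega
  · intro r j j' ha hb hjj'
    refine key (r, j) (r, j') ha hb (hrow r j j' ha hb hjj') ?_
    rintro ⟨h1, h2⟩
    have e1 : c.1 = r := by rw [← h1]
    have e2 : c'.1 = r := by rw [← h2]
    omega
  · intro r r' j ha hb hrr'
    refine key (r, j) (r', j) ha hb (hcol r r' j ha hb hrr') ?_
    rintro ⟨h1, h2⟩
    have e1 : c.1 = r := by rw [← h1]
    have e2 : c'.1 = r' := by rw [← h2]
    omega

end ImmHecke
end
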